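/- arXiv:1808.10828 — 6 statements merged into one kernel-verified Lean document; each statement's English description precedes it below -/
import Mathlib

section
/- Suppose C lies in the copula domain of attraction of the extreme-value copula C_∞ associated with the stable tail dependence function L, and Condition (SO)_p holds with a continuous non-null limit function S_p. Then there exists ρ_p ≤ 0 such that α_p is regularly varying at infinity of index ρ_p, and S_p is homogeneous of order 1 − ρ_p, i.e. S_p(s·x) = s^{1−ρ_p}·S_p(x) for all s > 0 and x ∈ [0,∞)^d. -/
open Filter Topology

noncomputable section

/-- A `d`-variate stable tail dependence function: homogeneous of order 1, convex,
`L(e_j) = 1`, and `max ≤ L ≤ sum` on the nonnegative orthant. -/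
def IsSTDF (d : ℕ) (L : (Fin d → ℝ) → ℝ) : Prop :=
  (∀ s : ℝ, 0 < s → ∀ x : Fin d → ℝ, (∀ j, 0 ≤ x j) → L (s • x) = s * L x) ∧
  ConvexOn ℝ (Set.Ici (0 : Fin d → ℝ)) L ∧
  (∀ j : Fin d, L (fun i => if i = j then (1 : ℝ) else 0) = 1) ∧
  (∀ x : Fin d → ℝ, (∀ j, 0 ≤ x j) → (∀ j, x j ≤ L x) ∧ L x ≤ ∑ j, x j)

/-- The only properties of a copula that are used: `C(1,…,1) = 1`, `C(u) ≤ min_j u_j`,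
and the ℓ¹-Lipschitz bound on the unit cube. -/
def IsCopulaLike (d : ℕ) (C : (Fin d → ℝ) → ℝ) : Prop :=
  C (fun _ => 1) = 1 ∧
  (∀ u : Fin d → ℝ, (∀ j, 0 ≤ u j ∧ u j ≤ 1) → ∀ j, C u ≤ u j) ∧
  (∀ u v : Fin d → ℝ, (∀ j, 0 ≤ u j ∧ u j ≤ 1) → (∀ j, 0 ≤ v j ∧ v j ≤ 1) →
    |C u - C v| ≤ ∑ j, |u j - v j|)

/-- The extreme-value copula associated with the stable tail dependence function `L`:
`C_∞(u) = exp(−L(−log u_1,…,−log u_d))` for `u ∈ (0,1]^d`, and `0` if some `u_j = 0`. -/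
def CinfFun (d : ℕ) (L : (Fin d → ℝ) → ℝ) (u : Fin d → ℝ) : ℝ :=
  if ∀ j, 0 < u j then Real.exp (-(L (fun j => -Real.log (u j)))) else 0

/-- Regular variation at infinity of index `ρ`. -/
def RegVary (f : ℝ → ℝ) (ρ : ℝ) : Prop :=
  ∀ x : ℝ, 0 < x → Filter.Tendsto (fun t => f (t * x) / f t) Filter.atTop (nhds (x ^ ρ))

/-- POT form of the copula domain of attraction:
`t(1 − C(1 − x/t)) → L(x)` uniformly on `[0,T]^d` for every `T > 0`. -/
def PotDOA (d : ℕ) (C L : (Fin d → ℝ) → ℝ) : Prop :=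
  ∀ T : ℝ, 0 < T → TendstoUniformlyOn
    (fun (t : ℝ) (x : Fin d → ℝ) => t * (1 - C (fun j => 1 - x j / t))) L Filter.atTop
    (Set.Icc (0 : Fin d → ℝ) (fun _ => T))

/-- BM form of the copula domain of attraction: `C(u^{1/r})^r → C_∞(u)` pointwise. -/
def BmDOA (d : ℕ) (C Cinf : (Fin d → ℝ) → ℝ) : Prop :=
  ∀ u : Fin d → ℝ, (∀ j, 0 ≤ u j ∧ u j ≤ 1) →
    Filter.Tendsto (fun r : ℝ => C (fun j => u j ^ (1/r)) ^ r) Filter.atTop (nhds (Cinf u))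

/-- The uniform-convergence part of Condition (SO)_p with auxiliary function `αp`
and limit `Sp`. -/
def SOpot (d : ℕ) (C L Sp : (Fin d → ℝ) → ℝ) (αp : ℝ → ℝ) : Prop :=
  ∀ T : ℝ, 0 < T → TendstoUniformlyOn
    (fun (t : ℝ) (x : Fin d → ℝ) => (t * (1 - C (fun j => 1 - x j / t)) - L x) / αp t)
    Sp Filter.atTop (Set.Icc (0 : Fin d → ℝ) (fun _ => T))

/-- The uniform-convergence part of Condition (SO)_b with auxiliary function `αb`
and limit `Sb`. -/
def SObm (d : ℕ) (C Cinf Sb : (Fin d → ℝ) → ℝ) (αb : ℝ → ℝ) : Prop :=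
  ∀ δ : ℝ, 0 < δ → δ < 1 → TendstoUniformlyOn
    (fun (r : ℝ) (u : Fin d → ℝ) => (C (fun j => u j ^ (1/r)) ^ r - Cinf u) / αb r)
    Sb Filter.atTop (Set.Icc (fun _ => δ) (fun _ => 1))

/-!
Since `L` is 1-homogeneous, `D(t, x) = t (1 − C(1 − x/t)) − L(x)` is jointly 1-homogeneous,
`D(ts, sx) = s D(t, x)`. Dividing by `α_p(ts)` and letting `t → ∞` in (SO)_p at a point `x₀` with
`S_p(x₀) ≠ 0` shows that `α_p(t)/α_p(ts)` converges to the continuous function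
`S_p(s x₀)/(s S_p(x₀))` of `s`. Such a limit of ratios is multiplicative in `s`, hence a power
`s^(-ρ_p)`, and then (SO)_p at `(ts, sx)` gives `S_p(sx) = s^(1-ρ_p) S_p(x)`. Finally `ρ_p > 0`
would make `α_p(t 2ⁿ)` eventually increasing in `n`, against `α_p → 0`.
-/

section RegularVariation

variable {f g : ℝ → ℝ}

lemma map_mul_of_tendsto_div_mul (hf : ∀ᶠ t in atTop, f t ≠ 0)
    (hlim : ∀ x, 0 < x → Tendsto (fun t => f (t * x) / f t) atTop (𝓝 (g x)))
    {x y : ℝ} (hx : 0 < x) (hy : 0 < y) : g (x * y) = g x * g y := by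
  have hshift : Tendsto (fun t => t * x) atTop atTop := tendsto_id.atTop_mul_const hx
  have hprod : Tendsto (fun t => f (t * x * y) / f (t * x) * (f (t * x) / f t)) atTop
      (𝓝 (g y * g x)) :=
    ((hlim y hy).comp hshift).mul (hlim x hx)
  refine (tendsto_nhds_unique (hlim (x * y) (mul_pos hx hy)) (hprod.congr' ?_)).trans
    (mul_comm _ _)
  filter_upwards [hshift.eventually hf] with t ht
  rw [div_mul_div_cancel₀ ht, mul_assoc]

lemma exists_rpow_of_continuousOn_of_map_mul (hg : ContinuousOn g (Set.Ioi 0))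
    (hmul : ∀ x y, 0 < x → 0 < y → g (x * y) = g x * g y) (h1 : g 1 = 1) :
    ∃ ρ : ℝ, ∀ x, 0 < x → g x = x ^ ρ := by
  have hne : ∀ x, 0 < x → g x ≠ 0 := fun x hx h0 => by
    have := hmul x x⁻¹ hx (inv_pos.2 hx)
    rw [mul_inv_cancel₀ hx.ne', h1, h0, zero_mul] at this
    exact one_ne_zero this
  have hpos : ∀ x, 0 < x → 0 < g x := fun x hx => by
    have hsqrt := Real.sqrt_pos.2 hx
    rw [← Real.mul_self_sqrt hx.le, hmul _ _ hsqrt hsqrt]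
    exact mul_self_pos.2 (hne _ hsqrt)
  -- `log ∘ g ∘ exp` is additive and continuous, hence linear
  let h : ℝ →+ ℝ := AddMonoidHom.mk' (fun u => Real.log (g (Real.exp u))) fun u v => by
    simp only [Real.exp_add, hmul _ _ (Real.exp_pos u) (Real.exp_pos v),
      Real.log_mul (hne _ (Real.exp_pos u)) (hne _ (Real.exp_pos v))]
  have hcont : Continuous h :=
    (hg.comp_continuous Real.continuous_exp Real.exp_pos).log fun u => hne _ (Real.exp_pos u)
  refine ⟨h 1, fun x hx => ?_⟩
  have hlin : h (Real.log x) = Real.log x * h 1 := by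
    simpa using (h.toRealLinearMap hcont).map_smul (Real.log x) 1
  have hlog : h (Real.log x) = Real.log (g x) := by
    simp [h, Real.exp_log hx]
  rw [Real.rpow_def_of_pos hx, ← hlin, hlog, Real.exp_log (hpos x hx)]

lemma exists_regVary_of_tendsto_div (hf : ∀ᶠ t in atTop, f t ≠ 0)
    (hg : ContinuousOn g (Set.Ioi 0))
    (hlim : ∀ x, 0 < x → Tendsto (fun t => f (t * x) / f t) atTop (𝓝 (g x))) :
    ∃ ρ, RegVary f ρ := by
  have h1 : g 1 = 1 := by
    refine tendsto_nhds_unique (hlim 1 one_pos) (tendsto_const_nhds.congr' ?_)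
    filter_upwards [hf] with t ht
    rw [mul_one, div_self ht]
  obtain ⟨ρ, hρ⟩ := exists_rpow_of_continuousOn_of_map_mul hg
    (fun x y hx hy => map_mul_of_tendsto_div_mul hf hlim hx hy) h1
  exact ⟨ρ, fun x hx => hρ x hx ▸ hlim x hx⟩

lemma RegVary.inv {ρ : ℝ} (hf : RegVary f ρ) : RegVary f⁻¹ (-ρ) := fun x hx => by
  simpa only [Pi.inv_apply, inv_div_inv, inv_div, Real.rpow_neg hx.le] using
    (hf x hx).inv₀ (Real.rpow_pos_of_pos hx ρ).ne'

lemma RegVary.nonpos_of_tendsto_zero {ρ : ℝ} (hf : RegVary f ρ) (hpos : ∀ᶠ t in atTop, 0 < f t)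
    (h0 : Tendsto f atTop (𝓝 0)) : ρ ≤ 0 := by
  by_contra! hρ
  have hgrow : ∀ᶠ t in atTop, 0 < f t ∧ f t < f (t * 2) := by
    filter_upwards [hpos, (hf 2 two_pos).eventually (lt_mem_nhds (Real.one_lt_rpow one_lt_two hρ))]
      with t ht hlt
    exact ⟨ht, (one_lt_div ht).1 hlt⟩
  obtain ⟨t₁, ht₁⟩ := hgrow.exists_forall_of_atTop
  set t₀ := max t₁ 1
  have ht₀ : ∀ n : ℕ, t₁ ≤ t₀ * 2 ^ n := fun n =>
    (le_max_left _ _).trans (le_mul_of_one_le_right (by positivity) (one_le_pow₀ one_le_two))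
  have hmono : Monotone fun n : ℕ => f (t₀ * 2 ^ n) := monotone_nat_of_le_succ fun n => by
    simpa only [pow_succ, mul_assoc] using (ht₁ _ (ht₀ n)).2.le
  have hlim : Tendsto (fun n : ℕ => f (t₀ * 2 ^ n)) atTop (𝓝 0) :=
    h0.comp ((tendsto_pow_atTop_atTop_of_one_lt one_lt_two).const_mul_atTop (by positivity))
  have hle : f (t₀ * 2 ^ 0) ≤ 0 := hmono.ge_of_tendsto hlim 0
  exact (ht₁ _ (ht₀ 0)).1.not_ge hle

end RegularVariation

section JointlyHomogeneous

variable {E : Type*} [SMul ℝ E] {K : Set E} {D : ℝ → E → ℝ} {α : ℝ → ℝ} {S : E → ℝ}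

lemma div_eq_smul_mul_div_of_jointly_homogeneous
    (hD : ∀ s : ℝ, 0 < s → ∀ x ∈ K, ∀ t, D (t * s) (s • x) = s * D t x)
    {s : ℝ} (hs : 0 < s) {x : E} (hx : x ∈ K) {t : ℝ} (ht : α t ≠ 0) :
    D (t * s) (s • x) / α (t * s) = s * (D t x / α t) * (α t / α (t * s)) := by
  rw [hD s hs x hx t]
  field_simp

lemma tendsto_div_mul_of_jointly_homogeneous
    (hD : ∀ s : ℝ, 0 < s → ∀ x ∈ K, ∀ t, D (t * s) (s • x) = s * D t x)
    (hK : ∀ s : ℝ, 0 < s → ∀ x ∈ K, s • x ∈ K) (hα : ∀ᶠ t in atTop, α t ≠ 0)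
    (hconv : ∀ x ∈ K, Tendsto (fun t => D t x / α t) atTop (𝓝 (S x)))
    {x₀ : E} (hx₀ : x₀ ∈ K) (hS : S x₀ ≠ 0) {s : ℝ} (hs : 0 < s) :
    Tendsto (fun t => α t / α (t * s)) atTop (𝓝 (S (s • x₀) / (s * S x₀))) := by
  have hscaled := (hconv _ (hK s hs x₀ hx₀)).comp (tendsto_id.atTop_mul_const hs)
  refine (hscaled.div ((hconv x₀ hx₀).const_mul s) (mul_ne_zero hs.ne' hS)).congr' ?_
  filter_upwards [hα, (hconv x₀ hx₀).eventually_ne hS] with t ht hDt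
  show D (t * s) (s • x₀) / α (t * s) / (s * (D t x₀ / α t)) = α t / α (t * s)
  rw [div_eq_iff (mul_ne_zero hs.ne' hDt),
    div_eq_smul_mul_div_of_jointly_homogeneous hD hs hx₀ ht]
  ring

lemma map_smul_of_jointly_homogeneous
    (hD : ∀ s : ℝ, 0 < s → ∀ x ∈ K, ∀ t, D (t * s) (s • x) = s * D t x)
    (hK : ∀ s : ℝ, 0 < s → ∀ x ∈ K, s • x ∈ K) (hα : ∀ᶠ t in atTop, α t ≠ 0)
    (hconv : ∀ x ∈ K, Tendsto (fun t => D t x / α t) atTop (𝓝 (S x)))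
    {ρ : ℝ} (hreg : RegVary α ρ) {s : ℝ} (hs : 0 < s) {x : E} (hx : x ∈ K) :
    S (s • x) = s ^ (1 - ρ) * S x := by
  have hratio : Tendsto (fun t => α t / α (t * s)) atTop (𝓝 (s ^ (-ρ))) := by
    simpa only [Pi.inv_apply, inv_div_inv] using hreg.inv s hs
  have hscaled := (hconv _ (hK s hs x hx)).comp (tendsto_id.atTop_mul_const hs)
  have hprod := ((hconv x hx).const_mul s).mul hratio
  have : S (s • x) = s * S x * s ^ (-ρ) := by
    refine tendsto_nhds_unique hscaled (hprod.congr' ?_)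
    filter_upwards [hα] with t ht
    exact (div_eq_smul_mul_div_of_jointly_homogeneous hD hs hx ht).symm
  rw [this, Real.rpow_sub hs, Real.rpow_one, Real.rpow_neg hs.le]
  ring

end JointlyHomogeneous

lemma tail_sub_stdf_jointly_homogeneous {d : ℕ} (C : (Fin d → ℝ) → ℝ) {L : (Fin d → ℝ) → ℝ}
    (hL : ∀ s : ℝ, 0 < s → ∀ x : Fin d → ℝ, (∀ j, 0 ≤ x j) → L (s • x) = s * L x) :
    ∀ s : ℝ, 0 < s → ∀ x ∈ Set.Ici (0 : Fin d → ℝ), ∀ t : ℝ,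
      t * s * (1 - C (fun j => 1 - (s • x) j / (t * s))) - L (s • x) =
        s * (t * (1 - C (fun j => 1 - x j / t)) - L x) := by
  intro s hs x hx t
  have harg : (fun j => 1 - (s • x) j / (t * s)) = fun j => 1 - x j / t := funext fun j => by
    rw [Pi.smul_apply, smul_eq_mul, mul_comm t, mul_div_mul_left _ _ hs.ne']
  rw [harg, hL s hs x hx]
  ring

lemma SOpot.tendsto {d : ℕ} {C L Sp : (Fin d → ℝ) → ℝ} {αp : ℝ → ℝ} (h : SOpot d C L Sp αp) :
    ∀ x ∈ Set.Ici (0 : Fin d → ℝ),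
      Tendsto (fun t => (t * (1 - C (fun j => 1 - x j / t)) - L x) / αp t) atTop (𝓝 (Sp x)) :=
  fun x hx => (h (‖x‖ + 1) (by positivity)).tendsto_at
    ⟨hx, fun j => (Real.le_norm_self _).trans ((norm_le_pi_norm x j).trans (by linarith))⟩

theorem statement0_general {d : ℕ} (C L Sp : (Fin d → ℝ) → ℝ) (αp : ℝ → ℝ)
    (hL : IsSTDF d L)
    (hαpos : ∀ t : ℝ, 0 < t → 0 < αp t)
    (hα0 : Filter.Tendsto αp Filter.atTop (nhds 0))
    (hScont : ContinuousOn Sp (Set.Ici (0 : Fin d → ℝ)))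
    (hSnonnull : ∃ x : Fin d → ℝ, (∀ j, 0 ≤ x j) ∧ Sp x ≠ 0)
    (hSO : SOpot d C L Sp αp) :
    ∃ ρp : ℝ, ρp ≤ 0 ∧ RegVary αp ρp ∧
      ∀ s : ℝ, 0 < s → ∀ x : Fin d → ℝ, (∀ j, 0 ≤ x j) →
        Sp (s • x) = s ^ (1 - ρp) * Sp x := by
  obtain ⟨x₀, hx₀, hSx₀⟩ := hSnonnull
  have hK : ∀ s : ℝ, 0 < s → ∀ x ∈ Set.Ici (0 : Fin d → ℝ), s • x ∈ Set.Ici 0 :=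
    fun s hs x (hx : 0 ≤ x) => smul_nonneg hs.le hx
  have hD := tail_sub_stdf_jointly_homogeneous C hL.1
  have hα : ∀ᶠ t in atTop, 0 < αp t := (eventually_gt_atTop 0).mono hαpos
  have hαne : ∀ᶠ t in atTop, αp t ≠ 0 := hα.mono fun t ht => ht.ne'
  have hg : ContinuousOn (fun s : ℝ => Sp (s • x₀) / (s * Sp x₀)) (Set.Ioi 0) :=
    (hScont.comp (continuous_id.smul continuous_const).continuousOn fun s hs => hK s hs x₀ hx₀).div
      (continuous_id.mul continuous_const).continuousOn fun s hs => mul_ne_zero (ne_of_gt hs) hSx₀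
  obtain ⟨σ, hσ⟩ := exists_regVary_of_tendsto_div (f := αp⁻¹)
    (hα.mono fun t ht => (inv_pos.2 ht).ne') hg fun s hs => by
      simpa only [Pi.inv_apply, inv_div_inv] using
        tendsto_div_mul_of_jointly_homogeneous hD hK hαne hSO.tendsto hx₀ hSx₀ hs
  have hreg : RegVary αp (-σ) := by simpa only [inv_inv] using hσ.inv
  exact ⟨-σ, hreg.nonpos_of_tendsto_zero hα hα0, hreg, fun s hs x hx =>
    map_smul_of_jointly_homogeneous hD hK hαne hSO.tendsto hreg hs hx⟩

/-- Lemma 2.2 (i). Under (SO)_p with continuous non-null `Sp`, the auxiliary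
function `αp` is regularly varying of some index `ρ_p ≤ 0` and `Sp` is homogeneous of
order `1 − ρ_p`. -/
theorem statement0 {d : ℕ} (C L Sp : (Fin d → ℝ) → ℝ) (αp : ℝ → ℝ)
    (hL : IsSTDF d L) (hC : IsCopulaLike d C)
    (hDOA : PotDOA d C L)
    (hαpos : ∀ t : ℝ, 0 < t → 0 < αp t)
    (hα0 : Filter.Tendsto αp Filter.atTop (nhds 0))
    (hScont : ContinuousOn Sp (Set.Ici (0 : Fin d → ℝ)))
    (hSnonnull : ∃ x : Fin d → ℝ, (∀ j, 0 ≤ x j) ∧ Sp x ≠ 0)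
    (hSO : SOpot d C L Sp αp) :
    ∃ ρp : ℝ, ρp ≤ 0 ∧ RegVary αp ρp ∧
      ∀ s : ℝ, 0 < s → ∀ x : Fin d → ℝ, (∀ j, 0 ≤ x j) →
        Sp (s • x) = s ^ (1 - ρp) * Sp x :=
  statement0_general C L Sp αp hL hαpos hα0 hScont hSnonnull hSO
end
end

section
/- Suppose C lies in the copula domain of attraction of the extreme-value copula C_∞ associated with the stable tail dependence function L, and Condition (SO)_b holds with a continuous non-null limit function S_b. Then there exists ρ_b ≤ 0 such that α_b is regularly varying at infinity of index ρ_b, and S_b(u^s)/C_∞(u^s) = s^{1−ρ_b}·S_b(u)/C_∞(u) for all s > 0 and u ∈ (0,1]^d, where u^s := (u_1^s,…,u_d^s). -/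
/-!
Write `A_r(u) = C(u^{1/r})^r`. Max-stability of `C_∞` gives `A_{rs}(u^s) = A_r(u)^s`, so
`A_r(u)^s − C_∞(u)^s`, divided by `α_b(rs)`, tends to `S_b(u^s)` by (SO)_b at `u^s`, while
divided by `α_b(r)` it tends to `s C_∞(u)^{s−1} S_b(u)` by the delta method. At a point `u` with
`S_b(u) ≠ 0` this yields a limit of `α_b(rs)/α_b(r)` that is continuous in `s`; being
multiplicative in `s`, it is a power `s^ρ`, and `ρ ≤ 0` because `α_b → 0`. Comparing the two
limits once more, now at an arbitrary `u`, gives the homogeneity of `S_b / C_∞`.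
-/

open Filter Topology

noncomputable section

section Asymptotics

variable {ι : Type*} {l : Filter ι}

theorem HasDerivAt.tendsto_sub_div {f : ℝ → ℝ} {f' x₀ S : ℝ} (hf : HasDerivAt f f' x₀)
    {x ε : ι → ℝ} (hε : Tendsto ε l (𝓝 0)) (hε0 : ∀ᶠ i in l, ε i ≠ 0)
    (hx : Tendsto (fun i => (x i - x₀) / ε i) l (𝓝 S)) :
    Tendsto (fun i => (f (x i) - f x₀) / ε i) l (𝓝 (f' * S)) := by
  have hx₀ : Tendsto x l (𝓝 x₀) := by
    have h := (hx.mul hε).add_const x₀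
    rw [mul_zero, zero_add] at h
    refine h.congr' ?_
    filter_upwards [hε0] with i hi
    field_simp
    ring
  set G := Function.update (slope f x₀) x₀ f'
  have hG : ContinuousAt G x₀ := by
    rw [continuousAt_update_same]
    exact hasDerivAt_iff_tendsto_slope.mp hf
  have hGx₀ : G x₀ = f' := Function.update_self ..
  have hsplit : ∀ y, f y - f x₀ = G y * (y - x₀) := by
    intro y
    rcases eq_or_ne y x₀ with rfl | hy
    · simp
    · rw [show G y = slope f x₀ y from Function.update_of_ne hy _ _, slope_def_field,
        div_mul_cancel₀ _ (sub_ne_zero.mpr hy)]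
  rw [← hGx₀]
  refine ((hG.tendsto.comp hx₀).mul hx).congr fun i => ?_
  rw [hsplit, mul_div_assoc, Function.comp_apply]

theorem tendsto_div_div_of_tendsto {f a b : ι → ℝ} {x y : ℝ}
    (ha : Tendsto (fun i => f i / a i) l (𝓝 x)) (hb : Tendsto (fun i => f i / b i) l (𝓝 y))
    (hx : x ≠ 0) (ha0 : ∀ᶠ i in l, a i ≠ 0) (hb0 : ∀ᶠ i in l, b i ≠ 0) :
    Tendsto (fun i => a i / b i) l (𝓝 (y / x)) := by
  refine (hb.div ha hx).congr' ?_
  filter_upwards [ha.eventually_ne hx, ha0, hb0] with i hf ha hb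
  have hf : f i ≠ 0 := fun h => hf (by rw [h, zero_div])
  simp only [Pi.div_apply]
  field_simp

end Asymptotics

theorem eq_rpow_of_map_mul {g : ℝ → ℝ} (hg : ContinuousOn g (Set.Ioi 0))
    (hpos : ∀ s, 0 < s → 0 < g s) (hmul : ∀ s t, 0 < s → 0 < t → g (s * t) = g s * g t)
    {s : ℝ} (hs : 0 < s) : g s = s ^ Real.log (g (Real.exp 1)) := by
  -- `x ↦ log g(eˣ)` is a continuous additive map, hence linear.
  let F : ℝ →+ ℝ := AddMonoidHom.mk' (fun x => Real.log (g (Real.exp x))) fun x y => by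
    rw [Real.exp_add, hmul _ _ (Real.exp_pos x) (Real.exp_pos y),
      Real.log_mul (hpos _ (Real.exp_pos x)).ne' (hpos _ (Real.exp_pos y)).ne']
  have hF : Continuous F :=
    (hg.comp_continuous Real.continuous_exp Real.exp_pos).log
      fun x => (hpos _ (Real.exp_pos x)).ne'
  have hlin := map_real_smul F hF (Real.log s) 1
  simp only [smul_eq_mul, mul_one, F, AddMonoidHom.mk'_apply, Real.exp_log hs] at hlin
  rw [Real.rpow_def_of_pos hs, ← hlin, Real.exp_log (hpos s hs)]

section RegularVariation

variable {α g : ℝ → ℝ}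

theorem regVary_of_tendsto_ratio (hα : ∀ r, 0 < r → 0 < α r)
    (hg : ∀ s, 0 < s → Tendsto (fun r => α (r * s) / α r) atTop (𝓝 (g s)))
    (hgc : ContinuousOn g (Set.Ioi 0)) : RegVary α (Real.log (g (Real.exp 1))) := by
  have hmul : ∀ s t, 0 < s → 0 < t → g (s * t) = g s * g t := by
    intro s t hs ht
    have h := ((hg t ht).comp (tendsto_id.atTop_mul_const hs)).mul (hg s hs)
    refine (tendsto_nhds_unique (hg (s * t) (mul_pos hs ht)) (h.congr' ?_)).trans (mul_comm _ _)
    filter_upwards [eventually_gt_atTop 0] with r hr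
    have := (hα r hr).ne'
    have := (hα (r * s) (mul_pos hr hs)).ne'
    simp only [Function.comp_apply, id, mul_assoc]
    field_simp
  have hone : g 1 = 1 := by
    refine tendsto_nhds_unique (hg 1 one_pos) (tendsto_const_nhds.congr' ?_)
    filter_upwards [eventually_gt_atTop 0] with r hr
    rw [mul_one, div_self (hα r hr).ne']
  have hpos : ∀ s, 0 < s → 0 < g s := by
    intro s hs
    have hnonneg : 0 ≤ g s := ge_of_tendsto (hg s hs) <| by
      filter_upwards [eventually_gt_atTop 0] with r hr
      exact div_nonneg (hα _ (mul_pos hr hs)).le (hα r hr).le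
    refine hnonneg.lt_of_ne fun h => ?_
    have := hmul s s⁻¹ hs (inv_pos.mpr hs)
    rw [mul_inv_cancel₀ hs.ne', hone, ← h, zero_mul] at this
    exact one_ne_zero this
  intro s hs
  rw [← eq_rpow_of_map_mul hgc hpos hmul hs]
  exact hg s hs

theorem RegVary.nonpos {ρ : ℝ} (h : RegVary α ρ) (hα : ∀ r, 0 < r → 0 < α r)
    (hα0 : Tendsto α atTop (𝓝 0)) : ρ ≤ 0 := by
  by_contra! hρ
  have h2 : (1 : ℝ) < 2 ^ ρ := Real.one_lt_rpow (by norm_num) hρ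
  obtain ⟨T, hT⟩ := eventually_atTop.mp <|
    (h 2 two_pos).eventually (eventually_gt_nhds h2)
  set T₁ := max T 1
  have hT₁ : 0 < T₁ := lt_max_of_lt_right one_pos
  have hge : ∀ n : ℕ, T₁ ≤ T₁ * 2 ^ n := fun n =>
    le_mul_of_one_le_right hT₁.le (one_le_pow₀ one_le_two)
  -- Along `T₁ 2ⁿ` the ratio exceeds `1`, so `α` increases there, contradicting `α → 0`.
  have hmono : Monotone fun n : ℕ => α (T₁ * 2 ^ n) := by
    refine monotone_nat_of_le_succ fun n => ?_
    have hr := hT _ ((le_max_left T 1).trans (hge n))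
    rw [one_lt_div (hα _ (hT₁.trans_le (hge n)))] at hr
    simpa only [pow_succ, mul_assoc] using hr.le
  have hlim : Tendsto (fun n : ℕ => α (T₁ * 2 ^ n)) atTop (𝓝 0) :=
    hα0.comp ((tendsto_pow_atTop_atTop_of_one_lt one_lt_two).const_mul_atTop hT₁)
  have := hmono.ge_of_tendsto hlim 0
  simp only [pow_zero, mul_one] at this
  exact (hα T₁ hT₁).not_ge this

end RegularVariation

theorem exists_pos_ne_zero_of_continuousOn {d : ℕ} {S : (Fin d → ℝ) → ℝ}
    (hS : ContinuousOn S (Set.Icc 0 fun _ => 1))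
    (h : ∃ u : Fin d → ℝ, (∀ j, 0 ≤ u j ∧ u j ≤ 1) ∧ S u ≠ 0) :
    ∃ u : Fin d → ℝ, (∀ j, 0 < u j ∧ u j ≤ 1) ∧ S u ≠ 0 := by
  obtain ⟨u, hu, hSu⟩ := h
  set v : ℝ → Fin d → ℝ := fun ε j => max (u j) ε
  have hv : Tendsto v (𝓝[>] 0) (𝓝[Set.Icc 0 fun _ => 1] u) := by
    refine tendsto_nhdsWithin_iff.mpr ⟨?_, ?_⟩
    · have hv0 : v 0 = u := funext fun j => max_eq_left (hu j).1
      have hcont : Continuous v := continuous_pi fun j => continuous_const.max continuous_id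
      exact hv0 ▸ hcont.continuousAt.tendsto.mono_left nhdsWithin_le_nhds
    · filter_upwards [Ioo_mem_nhdsGT one_pos] with ε hε
      exact ⟨fun j => le_max_of_le_left (hu j).1, fun j => max_le (hu j).2 hε.2.le⟩
  have hne := hv.eventually ((hS u ⟨fun j => (hu j).1, fun j => (hu j).2⟩).eventually_ne hSu)
  obtain ⟨ε, hSε, hε⟩ := (hne.and (Ioo_mem_nhdsGT one_pos)).exists
  exact ⟨v ε, fun j => ⟨lt_max_of_lt_right hε.1, max_le (hu j).2 hε.2.le⟩, hSε⟩

section ExtremeValueCopula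

variable {d : ℕ} {C L Sb Cinf : (Fin d → ℝ) → ℝ} {αb : ℝ → ℝ} {u : Fin d → ℝ}

theorem cinfFun_pos (L : (Fin d → ℝ) → ℝ) (hu : ∀ j, 0 < u j) : 0 < CinfFun d L u := by
  rw [CinfFun, if_pos hu]
  exact Real.exp_pos _

theorem cinfFun_rpow (hL : IsSTDF d L) (hu : ∀ j, 0 < u j ∧ u j ≤ 1) {s : ℝ} (hs : 0 < s) :
    CinfFun d L (fun j => u j ^ s) = CinfFun d L u ^ s := by
  have hus : ∀ j, 0 < u j ^ s := fun j => Real.rpow_pos_of_pos (hu j).1 s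
  rw [CinfFun, CinfFun, if_pos hus, if_pos fun j => (hu j).1, ← Real.exp_mul]
  have hlog : (fun j => -Real.log (u j ^ s)) = s • fun j => -Real.log (u j) := by
    funext j
    rw [Real.log_rpow (hu j).1, Pi.smul_apply, smul_eq_mul]
    ring
  rw [hlog, hL.1 s hs _ fun j => neg_nonneg.mpr (Real.log_nonpos (hu j).1.le (hu j).2)]
  ring_nf

theorem SObm.tendsto (hSO : SObm d C Cinf Sb αb) (hu : ∀ j, 0 < u j ∧ u j ≤ 1) :
    Tendsto (fun r : ℝ => (C (fun j => u j ^ (1 / r)) ^ r - Cinf u) / αb r) atTop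
      (𝓝 (Sb u)) := by
  have hδ : ∀ᶠ δ in 𝓝[>] (0 : ℝ), δ < 1 ∧ ∀ j, δ ≤ u j := by
    have hδu : ∀ᶠ δ in 𝓝[>] (0 : ℝ), ∀ j, δ ≤ u j := eventually_all.mpr fun j => by
      filter_upwards [Ioo_mem_nhdsGT (hu j).1] with δ hδ using hδ.2.le
    filter_upwards [Ioo_mem_nhdsGT one_pos, hδu] with δ hδ1 hδu using ⟨hδ1.2, hδu⟩
  obtain ⟨δ, ⟨hδ1, hδu⟩, hδ0⟩ := (hδ.and self_mem_nhdsWithin).exists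
  exact (hSO δ hδ0 hδ1).tendsto_at ⟨hδu, fun j => (hu j).2⟩

theorem IsCopulaLike.eventually_nonneg (hC : IsCopulaLike d C) (hu : ∀ j, 0 < u j ∧ u j ≤ 1) :
    ∀ᶠ r : ℝ in atTop, 0 ≤ C (fun j => u j ^ (1 / r)) := by
  have hcoord : ∀ j, Tendsto (fun r : ℝ => u j ^ (1 / r)) atTop (𝓝 1) := fun j => by
    have h := (Real.continuousAt_const_rpow (hu j).1.ne').tendsto.comp tendsto_inv_atTop_zero
    simpa only [Real.rpow_zero, Function.comp_def, one_div] using h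
  have hdist : Tendsto (fun r : ℝ => ∑ j, |1 - u j ^ (1 / r)|) atTop (𝓝 0) := by
    have h := tendsto_finsetSum Finset.univ fun j _ => ((hcoord j).const_sub 1).abs
    simpa only [sub_self, abs_zero, Finset.sum_const_zero] using h
  filter_upwards [hdist.eventually (gt_mem_nhds one_pos), eventually_gt_atTop 0] with r hr hr0
  have hmem : ∀ j, 0 ≤ u j ^ (1 / r) ∧ u j ^ (1 / r) ≤ 1 := fun j =>
    ⟨Real.rpow_nonneg (hu j).1.le _, Real.rpow_le_one (hu j).1.le (hu j).2 (by positivity)⟩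
  have hlip := hC.2.2 (fun _ => 1) _ (fun _ => ⟨zero_le_one, le_rfl⟩) hmem
  rw [hC.1] at hlip
  linarith [(abs_le.mp (hlip.trans hr.le)).2]

theorem copula_rpow_rescale {r s : ℝ} (hr : 0 < r) (hs : 0 < s) (hu : ∀ j, 0 ≤ u j)
    (hC : 0 ≤ C (fun j => u j ^ (1 / r))) :
    C (fun j => (u j ^ s) ^ (1 / (r * s))) ^ (r * s) = (C (fun j => u j ^ (1 / r)) ^ r) ^ s := by
  have hexp : ∀ j, (u j ^ s) ^ (1 / (r * s)) = u j ^ (1 / r) := fun j => by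
    rw [← Real.rpow_mul (hu j)]
    congr 1
    field_simp
  simp only [hexp, Real.rpow_mul hC]

theorem SObm.tendsto_rpow_sub_div (hαpos : ∀ r, 0 < r → 0 < αb r)
    (hα0 : Tendsto αb atTop (𝓝 0)) (hSO : SObm d C (CinfFun d L) Sb αb)
    (hu : ∀ j, 0 < u j ∧ u j ≤ 1) (s : ℝ) :
    Tendsto (fun r : ℝ =>
        ((C (fun j => u j ^ (1 / r)) ^ r) ^ s - CinfFun d L u ^ s) / αb r) atTop
      (𝓝 (s * CinfFun d L u ^ (s - 1) * Sb u)) :=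
  (Real.hasDerivAt_rpow_const (Or.inl (cinfFun_pos L fun j => (hu j).1).ne')).tendsto_sub_div
    hα0 ((eventually_gt_atTop 0).mono fun r hr => (hαpos r hr).ne') (hSO.tendsto hu)

theorem SObm.tendsto_rpow_sub_div_mul (hL : IsSTDF d L) (hC : IsCopulaLike d C)
    (hSO : SObm d C (CinfFun d L) Sb αb) (hu : ∀ j, 0 < u j ∧ u j ≤ 1) {s : ℝ}
    (hs : 0 < s) :
    Tendsto (fun r : ℝ =>
        ((C (fun j => u j ^ (1 / r)) ^ r) ^ s - CinfFun d L u ^ s) / αb (r * s)) atTop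
      (𝓝 (Sb fun j => u j ^ s)) := by
  have hus : ∀ j, 0 < u j ^ s ∧ u j ^ s ≤ 1 := fun j =>
    ⟨Real.rpow_pos_of_pos (hu j).1 s, Real.rpow_le_one (hu j).1.le (hu j).2 hs.le⟩
  have h := (hSO.tendsto hus).comp (tendsto_id.atTop_mul_const hs)
  rw [cinfFun_rpow hL hu hs] at h
  refine h.congr' ?_
  filter_upwards [hC.eventually_nonneg hu, eventually_gt_atTop 0] with r hCr hr
  simp only [Function.comp_apply, id, copula_rpow_rescale hr hs (fun j => (hu j).1.le) hCr]

theorem SObm.exists_regVary (hL : IsSTDF d L) (hC : IsCopulaLike d C)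
    (hαpos : ∀ r, 0 < r → 0 < αb r) (hα0 : Tendsto αb atTop (𝓝 0))
    (hScont : ContinuousOn Sb (Set.Icc 0 fun _ => 1))
    (hSnonnull : ∃ u : Fin d → ℝ, (∀ j, 0 ≤ u j ∧ u j ≤ 1) ∧ Sb u ≠ 0)
    (hSO : SObm d C (CinfFun d L) Sb αb) : ∃ ρ, RegVary αb ρ := by
  obtain ⟨u, hu, hSu⟩ := exists_pos_ne_zero_of_continuousOn hScont hSnonnull
  have hA := cinfFun_pos L fun j => (hu j).1
  have hαne : ∀ᶠ r in atTop, αb r ≠ 0 :=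
    (eventually_gt_atTop 0).mono fun r hr => (hαpos r hr).ne'
  set h : ℝ → ℝ := fun s => Sb (fun j => u j ^ s) / (s * CinfFun d L u ^ (s - 1) * Sb u)
  have hratio : ∀ s, 0 < s → Tendsto (fun r => αb r / αb (r * s)) atTop (𝓝 (h s)) :=
    fun s hs => tendsto_div_div_of_tendsto (hSO.tendsto_rpow_sub_div hαpos hα0 hu s)
      (hSO.tendsto_rpow_sub_div_mul hL hC hu hs)
      (mul_ne_zero (mul_ne_zero hs.ne' (Real.rpow_pos_of_pos hA _).ne') hSu) hαne
      (tendsto_id.atTop_mul_const hs |>.eventually hαne)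
  have hflip : ∀ s, 0 < s → Tendsto (fun r => αb (r * s) / αb r) atTop (𝓝 (h s⁻¹)) := by
    intro s hs
    refine ((hratio s⁻¹ (inv_pos.mpr hs)).comp (tendsto_id.atTop_mul_const hs)).congr fun r => ?_
    simp only [Function.comp_apply, id, mul_assoc, mul_inv_cancel₀ hs.ne', mul_one]
  have hcont : ContinuousOn h (Set.Ioi 0) := by
    have hpath : ContinuousOn (fun s : ℝ => Sb fun j => u j ^ s) (Set.Ioi 0) :=
      hScont.comp (continuous_pi fun j => Real.continuous_const_rpow (hu j).1.ne').continuousOn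
        fun s hs => ⟨fun j => Real.rpow_nonneg (hu j).1.le s,
          fun j => Real.rpow_le_one (hu j).1.le (hu j).2 (le_of_lt hs)⟩
    have hden : Continuous fun s : ℝ => s * CinfFun d L u ^ (s - 1) * Sb u :=
      (continuous_id.mul ((Real.continuous_const_rpow hA.ne').comp
        (continuous_id.sub continuous_const))).mul continuous_const
    exact hpath.div hden.continuousOn fun s hs =>
      mul_ne_zero (mul_ne_zero (ne_of_gt hs) (Real.rpow_pos_of_pos hA _).ne') hSu
  exact ⟨_, regVary_of_tendsto_ratio hαpos hflip (hcont.comp (continuousOn_inv₀.mono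
    fun s hs => ne_of_gt hs) fun s hs => inv_pos.mpr (Set.mem_Ioi.mp hs))⟩

theorem SObm.div_cinfFun_rpow (hL : IsSTDF d L) (hC : IsCopulaLike d C)
    (hαpos : ∀ r, 0 < r → 0 < αb r) (hα0 : Tendsto αb atTop (𝓝 0))
    (hSO : SObm d C (CinfFun d L) Sb αb) {ρ : ℝ} (hρ : RegVary αb ρ) {s : ℝ} (hs : 0 < s)
    (hu : ∀ j, 0 < u j ∧ u j ≤ 1) :
    Sb (fun j => u j ^ s) / CinfFun d L (fun j => u j ^ s)
      = s ^ (1 - ρ) * (Sb u / CinfFun d L u) := by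
  have hA := cinfFun_pos L fun j => (hu j).1
  have hinv : Tendsto (fun r => αb r / αb (r * s)) atTop (𝓝 (s ^ ρ)⁻¹) := by
    refine ((hρ s hs).inv₀ (Real.rpow_pos_of_pos hs ρ).ne').congr fun r => ?_
    rw [inv_div]
  have hSus : Sb (fun j => u j ^ s) = s * CinfFun d L u ^ (s - 1) * Sb u * (s ^ ρ)⁻¹ := by
    refine tendsto_nhds_unique (hSO.tendsto_rpow_sub_div_mul hL hC hu hs)
      (((hSO.tendsto_rpow_sub_div hαpos hα0 hu s).mul hinv).congr' ?_)
    filter_upwards [eventually_gt_atTop 0] with r hr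
    have := (hαpos r hr).ne'
    field_simp
  rw [cinfFun_rpow hL hu hs, hSus, Real.rpow_sub hA, Real.rpow_one, Real.rpow_sub hs,
    Real.rpow_one]
  have := (Real.rpow_pos_of_pos hA s).ne'
  have := (Real.rpow_pos_of_pos hs ρ).ne'
  field_simp

end ExtremeValueCopula

theorem statement1_general {d : ℕ} (C L Sb : (Fin d → ℝ) → ℝ) (αb : ℝ → ℝ)
    (hL : IsSTDF d L) (hC : IsCopulaLike d C)
    (hαpos : ∀ r : ℝ, 0 < r → 0 < αb r)
    (hα0 : Filter.Tendsto αb Filter.atTop (nhds 0))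
    (hScont : ContinuousOn Sb (Set.Icc (0 : Fin d → ℝ) (fun _ => 1)))
    (hSnonnull : ∃ u : Fin d → ℝ, (∀ j, 0 ≤ u j ∧ u j ≤ 1) ∧ Sb u ≠ 0)
    (hSO : SObm d C (CinfFun d L) Sb αb) :
    ∃ ρb : ℝ, ρb ≤ 0 ∧ RegVary αb ρb ∧
      ∀ s : ℝ, 0 < s → ∀ u : Fin d → ℝ, (∀ j, 0 < u j ∧ u j ≤ 1) →
        Sb (fun j => u j ^ s) / CinfFun d L (fun j => u j ^ s)
          = s ^ (1 - ρb) * (Sb u / CinfFun d L u) := by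
  obtain ⟨ρ, hρ⟩ := hSO.exists_regVary hL hC hαpos hα0 hScont hSnonnull
  exact ⟨ρ, hρ.nonpos hαpos hα0, hρ,
    fun s hs u hu => hSO.div_cinfFun_rpow hL hC hαpos hα0 hρ hs hu⟩

/-- Lemma 2.2 (ii). Under (SO)_b with continuous non-null `Sb`, the auxiliary
function `αb` is regularly varying of some index `ρ_b ≤ 0` and `Sb/C_∞` satisfies the
homogeneity relation `S_b(u^s)/C_∞(u^s) = s^{1−ρ_b}·S_b(u)/C_∞(u)`. -/
theorem statement1 {d : ℕ} (C L Sb : (Fin d → ℝ) → ℝ) (αb : ℝ → ℝ)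
    (hL : IsSTDF d L) (hC : IsCopulaLike d C)
    (hDOA : BmDOA d C (CinfFun d L))
    (hαpos : ∀ r : ℝ, 0 < r → 0 < αb r)
    (hα0 : Filter.Tendsto αb Filter.atTop (nhds 0))
    (hScont : ContinuousOn Sb (Set.Icc (0 : Fin d → ℝ) (fun _ => 1)))
    (hSnonnull : ∃ u : Fin d → ℝ, (∀ j, 0 ≤ u j ∧ u j ≤ 1) ∧ Sb u ≠ 0)
    (hSO : SObm d C (CinfFun d L) Sb αb) :
    ∃ ρb : ℝ, ρb ≤ 0 ∧ RegVary αb ρb ∧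
      ∀ s : ℝ, 0 < s → ∀ u : Fin d → ℝ, (∀ j, 0 < u j ∧ u j ≤ 1) →
        Sb (fun j => u j ^ s) / CinfFun d L (fun j => u j ^ s)
          = s ^ (1 - ρb) * (Sb u / CinfFun d L u) :=
  statement1_general C L Sb αb hL hC hαpos hα0 hScont hSnonnull hSO
end
end

section
/- Let C_∞ be an extreme-value copula with Π_j u_j ≤ C_∞(u) ≤ min_j u_j on [0,1]^d, let ρ ≤ 0, and let S : [0,1]^d → ℝ be a bounded function satisfying the homogeneity relation S(u^s)/C_∞(u^s) = s^{1−ρ}·S(u)/C_∞(u) for all s > 0 and u ∈ (0,1]^d. Then, with the finite constant K = e^d · sup{|S(v)| : v ∈ [e^{−1},1]^d}, one has |S(u)| ≤ K · u_∧ · (−log u_∧)^{1+|ρ|} for all u ∈ (0,1]^d, where u_∧ := min(u_1,…,u_d); in particular S(1,…,1) = 0. -/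
open Filter Topology

noncomputable section

/-!
Write `m = u_∧` and `s = −log m`. The point `v = u^{1/s}` lies in the cube `[e^{−1},1]^d`,
where `|S| ≤ sup |S|` and `C_∞(v) ≥ ∏ v_j ≥ e^{−d}`. Homogeneity with exponent `s` carries
`v` back to `u`, giving `|S(u)| = s^{1−ρ} · |S(v)|/C_∞(v) · C_∞(u)`, and `C_∞(u) ≤ m` finishes
the bound. At `u = (1,…,1)` homogeneity reads `S = 2^{1−ρ} S`, forcing `S(1,…,1) = 0`.
-/

open Real

theorem CinfFun_pos {d : ℕ} (L : (Fin d → ℝ) → ℝ) {w : Fin d → ℝ} (hw : ∀ j, 0 < w j) :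
    0 < CinfFun d L w := by
  rw [CinfFun, if_pos hw]
  exact exp_pos _

theorem exp_neg_one_le_rpow_one_div_neg_log {m x : ℝ} (hm0 : 0 < m) (hm1 : m < 1)
    (hmx : m ≤ x) : exp (-1) ≤ x ^ (1 / -log m) := by
  have hs : 0 < -log m := neg_pos.mpr (log_neg hm0 hm1)
  rw [rpow_def_of_pos (hm0.trans_le hmx), mul_one_div, exp_le_exp, le_div_iff₀ hs]
  linarith [log_le_log hm0 hmx]

theorem exp_neg_card_le_prod {ι : Type*} [Fintype ι] {v : ι → ℝ}
    (hv : ∀ j, exp (-1) ≤ v j) : exp (-(Fintype.card ι : ℝ)) ≤ ∏ j, v j := by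
  calc exp (-(Fintype.card ι : ℝ)) = ∏ _j : ι, exp (-1) := by
        rw [Finset.prod_const, Finset.card_univ, ← exp_nat_mul, mul_neg_one]
    _ ≤ ∏ j, v j := Finset.prod_le_prod (fun _ _ => (exp_pos _).le) (fun j _ => hv j)

section Homogeneous

variable {ι : Type*} {C S : (ι → ℝ) → ℝ} {ρ : ℝ}

theorem apply_one_eq_zero_of_homogeneous (hC1 : C (fun _ => 1) ≠ 0) (hρ : ρ < 1)
    (hhom : ∀ s : ℝ, 0 < s → ∀ u : ι → ℝ, (∀ j, 0 < u j ∧ u j ≤ 1) →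
      S (fun j => u j ^ s) / C (fun j => u j ^ s) = s ^ (1 - ρ) * (S u / C u)) :
    S (fun _ => 1) = 0 := by
  have h := hhom 2 two_pos (fun _ => 1) (fun _ => ⟨one_pos, le_rfl⟩)
  simp only [one_rpow] at h
  have h2 : (1 : ℝ) < 2 ^ (1 - ρ) := one_lt_rpow (by norm_num) (by linarith)
  have hratio : S (fun _ => 1) / C (fun _ => 1) = 0 := by
    nlinarith [h]
  simpa [hC1] using hratio

theorem abs_le_of_homogeneous [Fintype ι] {M : ℝ}
    (hCpos : ∀ w : ι → ℝ, (∀ j, 0 < w j) → 0 < C w)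
    (hlow : ∀ u : ι → ℝ, (∀ j, 0 ≤ u j ∧ u j ≤ 1) → ∏ j, u j ≤ C u)
    (hhom : ∀ s : ℝ, 0 < s → ∀ u : ι → ℝ, (∀ j, 0 < u j ∧ u j ≤ 1) →
      S (fun j => u j ^ s) / C (fun j => u j ^ s) = s ^ (1 - ρ) * (S u / C u))
    (hM : ∀ v ∈ Set.Icc (fun _ : ι => exp (-1)) (fun _ => 1), |S v| ≤ M)
    {u : ι → ℝ} (hu : ∀ j, 0 < u j ∧ u j ≤ 1) {m : ℝ} (hm0 : 0 < m) (hm1 : m < 1)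
    (hmu : ∀ j, m ≤ u j) :
    |S u| ≤ exp (Fintype.card ι) * M * C u * (-log m) ^ (1 - ρ) := by
  set s := -log m
  have hs : 0 < s := neg_pos.mpr (log_neg hm0 hm1)
  set v : ι → ℝ := fun j => u j ^ (1 / s)
  have hv : v ∈ Set.Icc (fun _ : ι => exp (-1)) (fun _ => 1) :=
    ⟨fun j => exp_neg_one_le_rpow_one_div_neg_log hm0 hm1 (hmu j),
      fun j => rpow_le_one (hu j).1.le (hu j).2 (by positivity)⟩
  have hvpos : ∀ j, 0 < v j := fun j => (exp_pos _).trans_le (hv.1 j)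
  have hvs : (fun j => v j ^ s) = u := by
    funext j
    rw [← rpow_mul (hu j).1.le, one_div_mul_cancel hs.ne', rpow_one]
  have hCu := hCpos u fun j => (hu j).1
  have hCv := hCpos v hvpos
  have hSu : S u = s ^ (1 - ρ) * (S v / C v) * C u := by
    have key := hhom s hs v fun j => ⟨hvpos j, hv.2 j⟩
    rwa [hvs, div_eq_iff hCu.ne'] at key
  have hCv_lower : exp (-(Fintype.card ι : ℝ)) ≤ C v :=
    (exp_neg_card_le_prod hv.1).trans (hlow v fun j => ⟨(hvpos j).le, hv.2 j⟩)
  have hSv : |S v| / C v ≤ exp (Fintype.card ι) * M := by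
    have hM0 : 0 ≤ M := (abs_nonneg _).trans (hM v hv)
    calc |S v| / C v ≤ M / exp (-(Fintype.card ι : ℝ)) :=
          div_le_div₀ hM0 (hM v hv) (exp_pos _) hCv_lower
      _ = exp (Fintype.card ι) * M := by rw [exp_neg, div_inv_eq_mul, mul_comm]
  have hspow : 0 < s ^ (1 - ρ) := rpow_pos_of_pos hs _
  calc |S u| = s ^ (1 - ρ) * (|S v| / C v) * C u := by
        rw [hSu, abs_mul, abs_mul, abs_div, abs_of_pos hCu, abs_of_pos hCv, abs_of_pos hspow]
    _ ≤ s ^ (1 - ρ) * (exp (Fintype.card ι) * M) * C u := by gcongr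
    _ = exp (Fintype.card ι) * M * C u * s ^ (1 - ρ) := by ring

end Homogeneous

theorem statement2_general {d : ℕ} (L S : (Fin d → ℝ) → ℝ) (ρ : ℝ)
    (hρ : ρ ≤ 0)
    (hlow : ∀ u : Fin d → ℝ, (∀ j, 0 ≤ u j ∧ u j ≤ 1) → ∏ j, u j ≤ CinfFun d L u)
    (hup : ∀ u : Fin d → ℝ, (∀ j, 0 ≤ u j ∧ u j ≤ 1) → ∀ j, CinfFun d L u ≤ u j)
    (hSbdd : ∃ M : ℝ, ∀ u : Fin d → ℝ, (∀ j, 0 ≤ u j ∧ u j ≤ 1) → |S u| ≤ M)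
    (hhom : ∀ s : ℝ, 0 < s → ∀ u : Fin d → ℝ, (∀ j, 0 < u j ∧ u j ≤ 1) →
      S (fun j => u j ^ s) / CinfFun d L (fun j => u j ^ s)
        = s ^ (1 - ρ) * (S u / CinfFun d L u))
    (K : ℝ)
    (hK : K = Real.exp d *
      sSup ((fun v => |S v|) '' Set.Icc (fun _ : Fin d => Real.exp (-1)) (fun _ => 1))) :
    (∀ u : Fin d → ℝ, (∀ j, 0 < u j ∧ u j ≤ 1) →
      |S u| ≤ K * (⨅ j, u j) * (-Real.log (⨅ j, u j)) ^ (1 + |ρ|)) ∧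
    S (fun _ => 1) = 0 := by
  have hS1 : S (fun _ => 1) = 0 :=
    apply_one_eq_zero_of_homogeneous (CinfFun_pos L fun _ => one_pos).ne' (by linarith) hhom
  refine ⟨fun u hu => ?_, hS1⟩
  set B := sSup ((fun v => |S v|) '' Set.Icc (fun _ : Fin d => exp (-1)) (fun _ => 1))
  obtain ⟨M, hM⟩ := hSbdd
  have hB : ∀ v ∈ Set.Icc (fun _ : Fin d => exp (-1)) (fun _ => 1), |S v| ≤ B :=
    fun v hv => le_csSup ⟨M, by
      rintro _ ⟨w, hw, rfl⟩
      exact hM w fun j => ⟨(exp_pos _).le.trans (hw.1 j), hw.2 j⟩⟩ ⟨v, hv, rfl⟩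
  have hB0 : 0 ≤ B := sSup_nonneg fun _ ⟨_, _, hx⟩ => hx ▸ abs_nonneg _
  rw [abs_of_nonpos hρ, ← sub_eq_add_neg, hK]
  by_cases hu1 : u = fun _ => 1
  · have hlog : log (⨅ _ : Fin d, (1 : ℝ)) = 0 := by
      rcases isEmpty_or_nonempty (Fin d) with _ | _ <;> simp
    subst hu1
    rw [hS1, abs_zero, hlog, neg_zero, zero_rpow (by linarith), mul_zero]
  obtain ⟨j1, hj1⟩ : ∃ j, u j < 1 := by
    by_contra! h
    exact hu1 (funext fun j => le_antisymm (hu j).2 (h j))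
  have : Nonempty (Fin d) := ⟨j1⟩
  set m := ⨅ i, u i
  obtain ⟨j0, hj0⟩ : ∃ j, u j = m := exists_eq_ciInf_of_finite
  have hmu : ∀ j, m ≤ u j := fun j => ciInf_le (Finite.bddBelow_range u) j
  have hm0 : 0 < m := hj0 ▸ (hu j0).1
  have hm1 : m < 1 := (hmu j1).trans_lt hj1
  have hbound := abs_le_of_homogeneous (fun _ => CinfFun_pos L) hlow hhom hB hu hm0 hm1 hmu
  have hCu : CinfFun d L u ≤ m := hj0 ▸ hup u (fun j => ⟨(hu j).1.le, (hu j).2⟩) j0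
  rw [Fintype.card_fin] at hbound
  refine hbound.trans ?_
  gcongr
  exact rpow_nonneg (neg_nonneg.mpr (log_nonpos hm0.le hm1.le)) _

/-- the growth bound (2.3): if a bounded `S` satisfies the (SO)_b homogeneity
relation, then `|S(u)| ≤ K·u_∧·(−log u_∧)^{1+|ρ|}` with
`K = e^d·sup{|S(v)| : v ∈ [e^{−1},1]^d}`; in particular `S(1,…,1) = 0`. -/
theorem statement2 {d : ℕ} (hd : 0 < d) (L S : (Fin d → ℝ) → ℝ) (ρ : ℝ)
    (hL : IsSTDF d L) (hρ : ρ ≤ 0)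
    (hlow : ∀ u : Fin d → ℝ, (∀ j, 0 ≤ u j ∧ u j ≤ 1) → ∏ j, u j ≤ CinfFun d L u)
    (hup : ∀ u : Fin d → ℝ, (∀ j, 0 ≤ u j ∧ u j ≤ 1) → ∀ j, CinfFun d L u ≤ u j)
    (hSbdd : ∃ M : ℝ, ∀ u : Fin d → ℝ, (∀ j, 0 ≤ u j ∧ u j ≤ 1) → |S u| ≤ M)
    (hhom : ∀ s : ℝ, 0 < s → ∀ u : Fin d → ℝ, (∀ j, 0 < u j ∧ u j ≤ 1) →
      S (fun j => u j ^ s) / CinfFun d L (fun j => u j ^ s)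
        = s ^ (1 - ρ) * (S u / CinfFun d L u))
    (K : ℝ)
    (hK : K = Real.exp d *
      sSup ((fun v => |S v|) '' Set.Icc (fun _ : Fin d => Real.exp (-1)) (fun _ => 1))) :
    (∀ u : Fin d → ℝ, (∀ j, 0 < u j ∧ u j ≤ 1) →
      |S u| ≤ K * (⨅ j, u j) * (-Real.log (⨅ j, u j)) ^ (1 + |ρ|)) ∧
    S (fun _ => 1) = 0 :=
  statement2_general L S ρ hρ hlow hup hSbdd hhom K hK
end
end

section
/- Let C be a copula lying in the copula domain of attraction of the extreme-value copula C_∞ associated with the stable tail dependence function L, let δ ∈ (0,1), let α : (0,∞) → (0,∞) with α(r) → 0 as r → ∞, and let S : [δ,1]^d → ℝ be continuous. Then (C(u^{1/r})^r − C_∞(u))/α(r) → S(u) as r → ∞ uniformly on [δ,1]^d if and only if (r·log C(u^{1/r}) − log C_∞(u))/α(r) → S(u)/C_∞(u) as r → ∞ uniformly on [δ,1]^d. -/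
open Filter Topology

noncomputable section

/-!
On `[δ,1]^d` the limit `C_∞` lies between `δ^d` and `1`, and `C(u^{1/r})` is eventually
positive uniformly in `u`, so both sides are statements about `F_r = C(u^{1/r})^r` and its
logarithm. The equivalence is then a uniform first-order delta method: if `(f_r - g)/α(r) → h`
uniformly with `h` bounded and `α → 0`, then `f_r → g` uniformly, and a quadratic Taylor
remainder for `φ` near the values of `g` gives `(φ ∘ f_r - φ ∘ g)/α(r) → φ'(g) h`. Taking
`φ = log` proves one direction and `φ = exp` applied to `log F_r` the other.
-/

lemma Real.abs_log_sub_log_sub_inv_mul_le {a b c : ℝ} (hc : 0 < c) (ha : c ≤ a) (hb : c ≤ b) :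
    |Real.log a - Real.log b - b⁻¹ * (a - b)| ≤ (a - b) ^ 2 / c ^ 2 := by
  have ha0 : 0 < a := hc.trans_le ha
  have hb0 : 0 < b := hc.trans_le hb
  have hupper : Real.log a - Real.log b ≤ b⁻¹ * (a - b) := by
    have h := Real.log_le_sub_one_of_pos (div_pos ha0 hb0)
    rw [Real.log_div ha0.ne' hb0.ne'] at h
    convert h using 1
    field_simp
  have hlower : a⁻¹ * (a - b) ≤ Real.log a - Real.log b := by
    have h := Real.one_sub_inv_le_log_of_pos (div_pos ha0 hb0)
    rw [Real.log_div ha0.ne' hb0.ne'] at h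
    convert h using 1
    field_simp
  have hgap : b⁻¹ * (a - b) - a⁻¹ * (a - b) ≤ (a - b) ^ 2 / c ^ 2 :=
    calc b⁻¹ * (a - b) - a⁻¹ * (a - b) = (a - b) ^ 2 / (a * b) := by field_simp
      _ ≤ (a - b) ^ 2 / c ^ 2 := by gcongr; nlinarith
  rw [abs_le]
  constructor <;> nlinarith [div_nonneg (sq_nonneg (a - b)) (sq_nonneg c)]

lemma Real.abs_exp_sub_exp_sub_exp_mul_le {a b : ℝ} (h : |a - b| ≤ 1) :
    |Real.exp a - Real.exp b - Real.exp b * (a - b)| ≤ Real.exp b * (a - b) ^ 2 := by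
  have hfactor : Real.exp a - Real.exp b - Real.exp b * (a - b)
      = Real.exp b * (Real.exp (a - b) - 1 - (a - b)) := by
    rw [Real.exp_sub]; field_simp
  rw [hfactor, abs_mul, abs_of_pos (Real.exp_pos b)]
  exact mul_le_mul_of_nonneg_left (Real.abs_exp_sub_one_sub_id_le h) (Real.exp_pos b).le

lemma abs_div_sub_mul_le {q a b c p h K : ℝ} (hc : c ≠ 0)
    (hq : |q - p * (a - b)| ≤ K * (a - b) ^ 2) :
    |q / c - p * h| ≤ |p| * |(a - b) / c - h| + K * |c| * |(a - b) / c| ^ 2 := by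
  have hsplit : q / c - p * h = p * ((a - b) / c - h) + (q - p * (a - b)) / c := by
    field_simp; ring
  have hrem : |(q - p * (a - b)) / c| ≤ K * |c| * |(a - b) / c| ^ 2 := by
    rw [abs_div, div_le_iff₀ (abs_pos.mpr hc), sq_abs]
    refine hq.trans_eq ?_
    field_simp
    rw [sq_abs]
  rw [hsplit, ← abs_mul]
  exact (abs_add_le _ _).trans (add_le_add_right hrem _)

theorem TendstoUniformlyOn.delta_method {ι X : Type*} {l : Filter ι} {s : Set X}
    {f : ι → X → ℝ} {g h : X → ℝ} {α : ι → ℝ} {φ φ' : ℝ → ℝ} {ρ K M B : ℝ}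
    (H : TendstoUniformlyOn (fun r u => (f r u - g u) / α r) h l s) (hρ : 0 < ρ)
    (hφ : ∀ u ∈ s, ∀ a, |a - g u| ≤ ρ →
      |φ a - φ (g u) - φ' (g u) * (a - g u)| ≤ K * (a - g u) ^ 2)
    (hφ' : ∀ u ∈ s, |φ' (g u)| ≤ M) (hh : ∀ u ∈ s, |h u| ≤ B)
    (hα : ∀ᶠ r in l, α r ≠ 0) (hα0 : Tendsto α l (𝓝 0)) :
    TendstoUniformlyOn (fun r u => (φ (f r u) - φ (g u)) / α r)
      (fun u => φ' (g u) * h u) l s := by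
  rw [Metric.tendstoUniformlyOn_iff] at H ⊢
  intro ε hε
  set B₁ := |B| + 1
  set M₁ := |M| + 1
  set K₁ := |K| + 1
  have hB₁ : 0 < B₁ := by positivity
  have hM₁ : 0 < M₁ := by positivity
  have hK₁ : 0 < K₁ := by positivity
  filter_upwards [H _ (show 0 < min 1 (ε / (2 * M₁)) by positivity), hα,
    Metric.tendsto_nhds.mp hα0 _ (show 0 < min (ρ / B₁) (ε / (2 * K₁ * B₁ ^ 2)) by positivity)]
    with r hDr hαr hαν u hu
  set D := (f r u - g u) / α r
  have hDh : |D - h u| < min 1 (ε / (2 * M₁)) := by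
    rw [← Real.dist_eq, dist_comm]; exact hDr u hu
  rw [Real.dist_0_eq_abs] at hαν
  have hD : |D| ≤ B₁ := by
    linarith [abs_sub_abs_le_abs_sub D (h u), min_le_left 1 (ε / (2 * M₁)), hh u hu,
      le_abs_self B]
  have hclose : |f r u - g u| ≤ ρ :=
    calc |f r u - g u| = |α r| * |D| := by rw [← abs_mul, mul_div_cancel₀ _ hαr]
      _ ≤ ρ / B₁ * B₁ := by gcongr; exact hαν.le.trans (min_le_left _ _)
      _ = ρ := by field_simp
  rw [dist_comm, Real.dist_eq]
  calc _ ≤ |φ' (g u)| * |D - h u| + K * |α r| * |D| ^ 2 :=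
        abs_div_sub_mul_le hαr (hφ u hu _ hclose)
    _ ≤ M₁ * |D - h u| + K₁ * |α r| * B₁ ^ 2 := by
        gcongr
        · linarith [hφ' u hu, le_abs_self M]
        · linarith [le_abs_self K]
    _ < M₁ * (ε / (2 * M₁)) + K₁ * (ε / (2 * K₁ * B₁ ^ 2)) * B₁ ^ 2 := by
        gcongr
        · exact hDh.trans_le (min_le_right _ _)
        · exact hαν.trans_le (min_le_right _ _)
    _ = ε := by field_simp; ring

theorem tendstoUniformlyOn_sub_div_iff_log_sub_div {ι X : Type*} {l : Filter ι} {s : Set X}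
    {f : ι → X → ℝ} {g h : X → ℝ} {α : ι → ℝ} {m M B : ℝ} (hm : 0 < m)
    (hg : ∀ u ∈ s, g u ∈ Set.Icc m M) (hh : ∀ u ∈ s, |h u| ≤ B)
    (hf : ∀ᶠ r in l, ∀ u ∈ s, 0 < f r u) (hα : ∀ᶠ r in l, α r ≠ 0)
    (hα0 : Tendsto α l (𝓝 0)) :
    TendstoUniformlyOn (fun r u => (f r u - g u) / α r) h l s ↔
      TendstoUniformlyOn (fun r u => (Real.log (f r u) - Real.log (g u)) / α r)
        (fun u => h u / g u) l s := by
  have hg0 : ∀ u ∈ s, 0 < g u := fun u hu => hm.trans_le (hg u hu).1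
  constructor
  · intro H
    refine (H.delta_method (φ := Real.log) (φ' := (·⁻¹)) (K := ((m / 2) ^ 2)⁻¹) (M := m⁻¹)
      (half_pos hm) (fun u hu a ha => ?_) (fun u hu => ?_) hh hα hα0).congr_right
      fun u _ => inv_mul_eq_div _ _
    · have ha' : m / 2 ≤ a := by linarith [(abs_le.mp ha).1, (hg u hu).1]
      exact (Real.abs_log_sub_log_sub_inv_mul_le (half_pos hm) ha'
        (by linarith [(hg u hu).1])).trans_eq (div_eq_inv_mul _ _)
    · rw [abs_inv, abs_of_pos (hg0 u hu)]
      exact inv_anti₀ hm (hg u hu).1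
  · intro H
    have hexp := H.delta_method (f := fun r u => Real.log (f r u)) (g := fun u => Real.log (g u))
      (φ := Real.exp) (φ' := Real.exp) (K := M) (M := M) (B := B / m) one_pos
      (fun u hu a ha => ?_) (fun u hu => ?_) (fun u hu => ?_) hα hα0
    · refine (hexp.congr (hf.mono fun r hr u hu => ?_)).congr_right fun u hu => ?_
      · simp only [Real.exp_log (hr u hu), Real.exp_log (hg0 u hu)]
      · simp only [Real.exp_log (hg0 u hu), mul_div_cancel₀ _ (hg0 u hu).ne']
    · refine (Real.abs_exp_sub_exp_sub_exp_mul_le ha).trans ?_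
      rw [Real.exp_log (hg0 u hu)]
      gcongr
      exact (hg u hu).2
    · rw [Real.exp_log (hg0 u hu), abs_of_pos (hg0 u hu)]
      exact (hg u hu).2
    · rw [abs_div, abs_of_pos (hg0 u hu)]
      calc |h u| / g u ≤ |h u| / m := div_le_div_of_nonneg_left (abs_nonneg _) hm (hg u hu).1
        _ ≤ B / m := div_le_div_of_nonneg_right (hh u hu) hm.le

lemma IsSTDF.nonneg {d : ℕ} {L : (Fin d → ℝ) → ℝ} (hL : IsSTDF d L) {x : Fin d → ℝ}
    (hx : ∀ j, 0 ≤ x j) : 0 ≤ L x := by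
  rcases d.eq_zero_or_pos with rfl | hd
  · -- `Fin 0 → ℝ` is a point, so homogeneity forces `L x = 2 L x`.
    have h2 := hL.1 2 two_pos x hx
    rw [Subsingleton.elim ((2 : ℝ) • x) x] at h2
    linarith
  · exact (hx ⟨0, hd⟩).trans ((hL.2.2.2 x hx).1 ⟨0, hd⟩)

lemma IsSTDF.cinfFun_mem_Icc {d : ℕ} {L : (Fin d → ℝ) → ℝ} (hL : IsSTDF d L)
    {u : Fin d → ℝ} (hu : ∀ j, 0 < u j ∧ u j ≤ 1) :
    CinfFun d L u ∈ Set.Icc (∏ j, u j) 1 := by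
  have hx : ∀ j, 0 ≤ -Real.log (u j) := fun j =>
    neg_nonneg.mpr (Real.log_nonpos (hu j).1.le (hu j).2)
  rw [CinfFun, if_pos fun j => (hu j).1]
  refine ⟨?_, Real.exp_le_one_iff.mpr (neg_nonpos.mpr (hL.nonneg hx))⟩
  calc ∏ j, u j = Real.exp (-∑ j, -Real.log (u j)) := by
        simp only [Finset.sum_neg_distrib, neg_neg, Real.exp_sum, Real.exp_log (hu _).1]
    _ ≤ Real.exp (-(L fun j => -Real.log (u j))) :=
        Real.exp_le_exp.mpr (neg_le_neg (hL.2.2.2 _ hx).2)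

lemma IsCopulaLike.one_sub_sum_le {d : ℕ} {C : (Fin d → ℝ) → ℝ} (hC : IsCopulaLike d C)
    {v : Fin d → ℝ} (hv : ∀ j, 0 ≤ v j ∧ v j ≤ 1) : 1 - ∑ j, (1 - v j) ≤ C v := by
  have h := hC.2.2 (fun _ => 1) v (fun _ => ⟨zero_le_one, le_rfl⟩) hv
  rw [hC.1, Finset.sum_congr rfl fun j _ => abs_of_nonneg (sub_nonneg.mpr (hv j).2)] at h
  linarith [(abs_le.mp h).2]

lemma IsCopulaLike.eventually_pos_rpow_one_div {d : ℕ} {C : (Fin d → ℝ) → ℝ}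
    (hC : IsCopulaLike d C) {δ : ℝ} (hδ : 0 < δ) :
    ∀ᶠ r : ℝ in atTop, ∀ u ∈ Set.Icc (fun _ : Fin d => δ) (fun _ => 1),
      0 < C (fun j => u j ^ (1 / r)) := by
  have hlim : Tendsto (fun r : ℝ => d * (1 - δ ^ (1 / r))) atTop (𝓝 0) := by
    have hpow : Tendsto (fun r : ℝ => δ ^ (1 / r)) atTop (𝓝 1) := by
      have := (Real.continuousAt_const_rpow hδ.ne' (b := 0)).tendsto.comp
        ((tendsto_const_nhds (x := (1 : ℝ))).div_atTop tendsto_id)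
      rwa [Real.rpow_zero] at this
    simpa using ((tendsto_const_nhds (x := (1 : ℝ))).sub hpow).const_mul (d : ℝ)
  filter_upwards [hlim.eventually_lt_const one_pos, eventually_gt_atTop 0] with r hr hr0 u hu
  have hv : ∀ j, δ ^ (1 / r) ≤ u j ^ (1 / r) ∧ u j ^ (1 / r) ≤ 1 := fun j =>
    ⟨Real.rpow_le_rpow hδ.le (hu.1 j) (by positivity),
      Real.rpow_le_one (hδ.le.trans (hu.1 j)) (hu.2 j) (by positivity)⟩
  have hsum : ∑ j, (1 - u j ^ (1 / r)) ≤ d * (1 - δ ^ (1 / r)) :=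
    calc ∑ j, (1 - u j ^ (1 / r)) ≤ ∑ _j : Fin d, (1 - δ ^ (1 / r)) :=
          Finset.sum_le_sum fun j _ => sub_le_sub_left (hv j).1 1
      _ = d * (1 - δ ^ (1 / r)) := by simp [mul_sub]
  have := hC.one_sub_sum_le fun j => ⟨(Real.rpow_pos_of_pos hδ _).le.trans (hv j).1, (hv j).2⟩
  linarith

theorem statement5_general {d : ℕ} (C L S : (Fin d → ℝ) → ℝ) (α : ℝ → ℝ) (δ : ℝ)
    (hδ0 : 0 < δ)
    (hL : IsSTDF d L) (hC : IsCopulaLike d C)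
    (hαpos : ∀ r : ℝ, 0 < r → 0 < α r)
    (hα0 : Filter.Tendsto α Filter.atTop (nhds 0))
    (hScont : ContinuousOn S (Set.Icc (fun _ : Fin d => δ) (fun _ => 1))) :
    TendstoUniformlyOn
      (fun (r : ℝ) (u : Fin d → ℝ) =>
        (C (fun j => u j ^ (1 / r)) ^ r - CinfFun d L u) / α r)
      S Filter.atTop (Set.Icc (fun _ : Fin d => δ) (fun _ => 1))
    ↔
    TendstoUniformlyOn
      (fun (r : ℝ) (u : Fin d → ℝ) =>
        (r * Real.log (C (fun j => u j ^ (1 / r))) - Real.log (CinfFun d L u)) / α r)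
      (fun u => S u / CinfFun d L u) Filter.atTop
      (Set.Icc (fun _ : Fin d => δ) (fun _ => 1)) := by
  have hCinf : ∀ u ∈ Set.Icc (fun _ : Fin d => δ) (fun _ => 1),
      CinfFun d L u ∈ Set.Icc (δ ^ d) 1 := fun u hu => by
    refine Set.Icc_subset_Icc_left ?_ (hL.cinfFun_mem_Icc fun j => ⟨hδ0.trans_le (hu.1 j), hu.2 j⟩)
    simpa using Finset.prod_le_prod (s := Finset.univ) (fun j _ => hδ0.le) fun j _ => hu.1 j
  obtain ⟨B, hB⟩ := isCompact_Icc.exists_bound_of_continuousOn hScont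
  have hCpos := hC.eventually_pos_rpow_one_div hδ0
  rw [tendstoUniformlyOn_sub_div_iff_log_sub_div (pow_pos hδ0 d) hCinf
    (fun u hu => (Real.norm_eq_abs _).symm.trans_le (hB u hu))
    (hCpos.mono fun r hr u hu => Real.rpow_pos_of_pos (hr u hu) r)
    ((eventually_gt_atTop 0).mono fun r hr => (hαpos r hr).ne') hα0]
  constructor <;> refine fun H => H.congr (hCpos.mono fun r hr u hu => ?_) <;>
    simp only [Real.log_rpow (hr u hu)]

/-- the equivalence (2.4): uniform convergence on `[δ,1]^d` of
`(C(u^{1/r})^r − C_∞(u))/α(r)` to `S(u)` is equivalent to uniform convergence of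
`(r·log C(u^{1/r}) − log C_∞(u))/α(r)` to `S(u)/C_∞(u)`. -/
theorem statement5 {d : ℕ} (C L S : (Fin d → ℝ) → ℝ) (α : ℝ → ℝ) (δ : ℝ)
    (hδ0 : 0 < δ) (hδ1 : δ < 1)
    (hL : IsSTDF d L) (hC : IsCopulaLike d C)
    (hDOA : BmDOA d C (CinfFun d L))
    (hαpos : ∀ r : ℝ, 0 < r → 0 < α r)
    (hα0 : Filter.Tendsto α Filter.atTop (nhds 0))
    (hScont : ContinuousOn S (Set.Icc (fun _ : Fin d => δ) (fun _ => 1))) :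
    TendstoUniformlyOn
      (fun (r : ℝ) (u : Fin d → ℝ) =>
        (C (fun j => u j ^ (1 / r)) ^ r - CinfFun d L u) / α r)
      S Filter.atTop (Set.Icc (fun _ : Fin d => δ) (fun _ => 1))
    ↔
    TendstoUniformlyOn
      (fun (r : ℝ) (u : Fin d → ℝ) =>
        (r * Real.log (C (fun j => u j ^ (1 / r))) - Real.log (CinfFun d L u)) / α r)
      (fun u => S u / CinfFun d L u) Filter.atTop
      (Set.Icc (fun _ : Fin d => δ) (fun _ => 1)) :=
  statement5_general C L S α δ hδ0 hL hC hαpos hα0 hScont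
end
end

section
/- Let L be a d-variate stable tail dependence function such that for every j = 1,…,d the first-order partial derivative ∂_j L exists and is continuous on {x ∈ [0,∞)^d : x_j > 0}. Then the convergences r·(L(x + x²/r) − L(x)) → Γ₁(x) and r·(L(x) − L(x − x²/r)) → Γ₂(x) (with x² := (x_1²,…,x_d²)) are uniform on [0,T]^d for every T > 0, and Γ₁ = Γ₂ = Γ, where Γ(x) = Σ_{j : x_j > 0} x_j² · ∂_j L(x). -/
/-!
Telescoping through the coordinates and applying the mean value theorem to each one writes
`r * (L (x + s • x² / r) - L x)` as `∑ j, s * x_j² * ∂_j L (z_j)` with every `z_j` within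
`|s| T² / r` of `x`. Convexity of `L` along coordinate lines, together with `x_j ≤ L x ≤ ∑ x_i`,
gives `-(∑ w_i) / w_j ≤ ∂_j L w ≤ 1`, so `x_j² * ∂_j L` is uniformly small near `x_j = 0`;
away from `x_j = 0`, `∂_j L` is uniformly continuous on a compact box. Taking `s = ±1` gives
both limits.
-/

open Filter Topology

noncomputable section

def HasPartialDerivs {d : ℕ} (L : (Fin d → ℝ) → ℝ) (Lj : Fin d → (Fin d → ℝ) → ℝ) : Prop :=
  ∀ j : Fin d, ∀ x : Fin d → ℝ, (∀ i, 0 ≤ x i) → 0 < x j →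
    HasDerivAt (fun h : ℝ => L (Function.update x j h)) (Lj j x) (x j)

def gammaFun {d : ℕ} (Lj : Fin d → (Fin d → ℝ) → ℝ) (x : Fin d → ℝ) : ℝ :=
  ∑ j, if 0 < x j then x j ^ 2 * Lj j x else 0

open Function Set

section Interpolation

variable {α : Type*} {d : ℕ}

def prefixMix (x y : Fin d → α) (k : ℕ) : Fin d → α :=
  fun i => if (i : ℕ) < k then y i else x i

@[simp] lemma prefixMix_zero (x y : Fin d → α) : prefixMix x y 0 = x := by
  ext i
  simp [prefixMix]

@[simp] lemma prefixMix_length (x y : Fin d → α) : prefixMix x y d = y := by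
  ext i
  simp [prefixMix]

lemma prefixMix_apply_mem (x y : Fin d → α) (k : ℕ) (i : Fin d) :
    prefixMix x y k i = x i ∨ prefixMix x y k i = y i := by
  unfold prefixMix
  split_ifs <;> simp

lemma update_prefixMix_self (x y : Fin d → α) (j : Fin d) :
    update (prefixMix x y j) j (x j) = prefixMix x y j := by
  simp [prefixMix]

lemma update_prefixMix_succ (x y : Fin d → α) (j : Fin d) :
    update (prefixMix x y j) j (y j) = prefixMix x y (j + 1) := by
  ext i
  rcases eq_or_ne i j with rfl | h
  · simp [prefixMix]
  · have : (i : ℕ) ≠ j := Fin.val_ne_of_ne h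
    simp only [update_of_ne h, prefixMix]
    split_ifs <;> first | rfl | omega

lemma sub_eq_sum_sub_update_prefixMix {M : Type*} [AddCommGroup M] (f : (Fin d → α) → M)
    (x y : Fin d → α) :
    f y - f x = ∑ j : Fin d,
      (f (update (prefixMix x y j) j (y j)) - f (update (prefixMix x y j) j (x j))) := by
  simp only [update_prefixMix_succ, update_prefixMix_self]
  rw [Fin.sum_univ_eq_sum_range (fun k => f (prefixMix x y (k + 1)) - f (prefixMix x y k)),
    Finset.sum_range_sub (fun k => f (prefixMix x y k)), prefixMix_zero, prefixMix_length]

end Interpolation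

lemma exists_mem_uIcc_sub_eq_mul {f f' : ℝ → ℝ} {a b : ℝ}
    (hf : ∀ t ∈ uIcc a b, HasDerivAt f (f' t) t) :
    ∃ c ∈ uIcc a b, f b - f a = (b - a) * f' c := by
  wlog hab : a < b generalizing a b
  · rcases (not_lt.1 hab).eq_or_lt with hba | hba
    · exact ⟨a, left_mem_uIcc, by simp [hba]⟩
    · obtain ⟨c, hc, hc_eq⟩ := this (by rwa [uIcc_comm]) hba
      exact ⟨c, by rwa [uIcc_comm], by linear_combination -hc_eq⟩
  rw [uIcc_of_lt hab] at hf ⊢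
  obtain ⟨c, hc, hc_eq⟩ := exists_hasDerivAt_eq_slope f f' hab
    (fun t ht => (hf t ht).continuousAt.continuousWithinAt)
    (fun t ht => hf t (Ioo_subset_Icc_self ht))
  refine ⟨c, Ioo_subset_Icc_self hc, ?_⟩
  rw [hc_eq, mul_div_cancel₀ _ (sub_ne_zero.2 hab.ne')]

section STDF

variable {d : ℕ} {L : (Fin d → ℝ) → ℝ} {Lj : Fin d → (Fin d → ℝ) → ℝ}

lemma update_nonneg {w : Fin d → ℝ} (hw : ∀ i, 0 ≤ w i) (j : Fin d) {t : ℝ} (ht : 0 ≤ t) :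
    ∀ i, 0 ≤ update w j t i := by
  intro i
  rcases eq_or_ne i j with rfl | h
  · simpa using ht
  · simpa [h] using hw i

lemma sum_update_eq (w : Fin d → ℝ) (j : Fin d) (t : ℝ) :
    ∑ i, update w j t i = ∑ i, w i - w j + t := by
  rw [Finset.sum_update_of_mem (Finset.mem_univ j),
    ← Finset.add_sum_erase _ _ (Finset.mem_univ j), Finset.sdiff_singleton_eq_erase]
  ring

lemma IsSTDF.convexOn_update (hL : IsSTDF d L) {w : Fin d → ℝ} (hw : ∀ i, 0 ≤ w i)
    (j : Fin d) : ConvexOn ℝ (Ici 0) (fun t => L (update w j t)) := by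
  have hline : ∀ t, AffineMap.lineMap (update w j 0) (update w j 1) t = update w j t := by
    intro t
    ext i
    rcases eq_or_ne i j with rfl | h
    · simp [AffineMap.lineMap_apply]
    · simp [AffineMap.lineMap_apply, h]
  have := hL.2.1.comp_affineMap (AffineMap.lineMap (update w j 0) (update w j 1) : ℝ →ᵃ[ℝ] _)
  refine (this.subset ?_ (convex_Ici 0)).congr fun t _ => by simp [hline]
  intro t ht i
  simpa [hline] using update_nonneg hw j ht i

lemma IsSTDF.le_update (hL : IsSTDF d L) {w : Fin d → ℝ} (hw : ∀ i, 0 ≤ w i) (j : Fin d)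
    {t : ℝ} (ht : 0 ≤ t) : t ≤ L (update w j t) := by
  simpa using (hL.2.2.2 _ (update_nonneg hw j ht)).1 j

lemma IsSTDF.update_le (hL : IsSTDF d L) {w : Fin d → ℝ} (hw : ∀ i, 0 ≤ w i) (j : Fin d)
    {t : ℝ} (ht : 0 ≤ t) : L (update w j t) ≤ ∑ i, w i - w j + t :=
  sum_update_eq w j t ▸ (hL.2.2.2 _ (update_nonneg hw j ht)).2

lemma IsSTDF.partialDeriv_le_one (hL : IsSTDF d L) (hLj : HasPartialDerivs L Lj)
    {w : Fin d → ℝ} (hw : ∀ i, 0 ≤ w i) {j : Fin d} (hwj : 0 < w j) : Lj j w ≤ 1 := by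
  have hslope : ∀ u, w j < u → Lj j w ≤ 1 + (∑ i, w i) / (u - w j) := by
    intro u hu
    have hpos : 0 < u - w j := sub_pos.2 hu
    have h := (hL.convexOn_update hw j).le_slope_of_hasDerivAt (mem_Ici.2 hwj.le)
      (mem_Ici.2 (hwj.le.trans hu.le)) hu (hLj j w hw hwj)
    rw [slope_def_field, update_eq_self] at h
    have hu_le := hL.update_le hw j (hwj.le.trans hu.le)
    have hw_le : w j ≤ L w := by simpa using hL.le_update hw j hwj.le
    calc Lj j w ≤ _ := h
      _ ≤ ((u - w j) + ∑ i, w i) / (u - w j) := by gcongr; linarith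
      _ = 1 + (∑ i, w i) / (u - w j) := by field_simp
  have hlim : Tendsto (fun u => 1 + (∑ i, w i) / (u - w j)) atTop (𝓝 (1 + 0)) :=
    tendsto_const_nhds.add (tendsto_const_nhds.div_atTop (tendsto_atTop_add_const_right _ _
      tendsto_id))
  rw [add_zero] at hlim
  exact ge_of_tendsto hlim ((eventually_gt_atTop (w j)).mono hslope)

lemma IsSTDF.neg_sum_le_mul_partialDeriv (hL : IsSTDF d L) (hLj : HasPartialDerivs L Lj)
    {w : Fin d → ℝ} (hw : ∀ i, 0 ≤ w i) {j : Fin d} (hwj : 0 < w j) :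
    -∑ i, w i ≤ w j * Lj j w := by
  have h := (hL.convexOn_update hw j).slope_le_of_hasDerivAt (mem_Ici.2 le_rfl)
    (mem_Ici.2 hwj.le) hwj (hLj j w hw hwj)
  rw [slope_def_field, update_eq_self, sub_zero, div_le_iff₀ hwj] at h
  have h0 := hL.update_le hw j le_rfl
  have hw_le : w j ≤ L w := by simpa using hL.le_update hw j hwj.le
  linarith

lemma IsSTDF.abs_sq_mul_partialDeriv_le (hL : IsSTDF d L) (hLj : HasPartialDerivs L Lj)
    {w : Fin d → ℝ} (hw : ∀ i, 0 ≤ w i) {j : Fin d} {a : ℝ} (ha : 0 < a) (haw : a ≤ 2 * w j) :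
    |a ^ 2 * Lj j w| ≤ a ^ 2 + 2 * a * ∑ i, w i := by
  have hwj : 0 < w j := by linarith
  have hle := hL.partialDeriv_le_one hLj hw hwj
  have hge := hL.neg_sum_le_mul_partialDeriv hLj hw hwj
  have hsum : 0 ≤ ∑ i, w i := Finset.sum_nonneg fun i (_ : i ∈ Finset.univ) => hw i
  rw [abs_le]
  constructor
  · rcases le_or_gt 0 (Lj j w) with h | h
    · nlinarith
    · nlinarith [mul_le_mul_of_nonpos_right haw (mul_nonpos_of_nonneg_of_nonpos ha.le h.le)]
  · nlinarith [mul_le_mul_of_nonneg_left hle (sq_nonneg a)]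

end STDF

section PartialDerivs

variable {d : ℕ} {L : (Fin d → ℝ) → ℝ} {Lj : Fin d → (Fin d → ℝ) → ℝ}

lemma HasPartialDerivs.exists_sub_eq_sum_mul (hLj : HasPartialDerivs L Lj)
    {x y : Fin d → ℝ} (hx : ∀ i, 0 ≤ x i) (hy : ∀ i, 0 ≤ y i)
    (hxy : ∀ j, x j = y j ∨ 0 < x j ∧ 0 < y j) :
    ∃ z : Fin d → Fin d → ℝ, (∀ j i, z j i ∈ uIcc (x i) (y i)) ∧
      L y - L x = ∑ j, (y j - x j) * Lj j (z j) := by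
  have hP : ∀ (j : Fin d) i, prefixMix x y j i ∈ uIcc (x i) (y i) := fun j i => by
    rcases prefixMix_apply_mem x y j i with h | h <;> rw [h]
    exacts [left_mem_uIcc, right_mem_uIcc]
  have hP0 : ∀ (j : Fin d) i, 0 ≤ prefixMix x y j i := fun j i => by
    rcases prefixMix_apply_mem x y j i with h | h <;> rw [h]
    exacts [hx i, hy i]
  have hstep : ∀ j, ∃ c ∈ uIcc (x j) (y j),
      L (update (prefixMix x y j) j (y j)) - L (update (prefixMix x y j) j (x j))
        = (y j - x j) * Lj j (update (prefixMix x y j) j c) := by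
    intro j
    rcases hxy j with h | ⟨hxj, hyj⟩
    · exact ⟨x j, left_mem_uIcc, by simp [h]⟩
    refine exists_mem_uIcc_sub_eq_mul (f := fun t => L (update (prefixMix x y j) j t))
      (f' := fun t => Lj j (update (prefixMix x y j) j t)) fun t ht => ?_
    have ht0 : 0 < t := (lt_inf_iff.2 ⟨hxj, hyj⟩).trans_le ht.1
    simpa using hLj j _ (update_nonneg (hP0 j) j ht0.le) (by simpa using ht0)
  choose c hc hc_eq using hstep
  refine ⟨fun j => update (prefixMix x y j) j (c j), fun j i => ?_, ?_⟩
  · rcases eq_or_ne i j with rfl | h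
    · simpa using hc i
    · simpa [h] using hP j i
  · rw [sub_eq_sum_sub_update_prefixMix]
    exact Finset.sum_congr rfl fun j _ => hc_eq j

lemma sum_le_of_mem_Icc {w : Fin d → ℝ} {R : ℝ} (hw : w ∈ Icc 0 (fun _ => R)) :
    ∑ i, w i ≤ d * R := by
  simpa using Finset.sum_le_sum fun i (_ : i ∈ Finset.univ) => hw.2 i

lemma IsSTDF.eventually_abs_sq_mul_partialDeriv_sub_lt (hL : IsSTDF d L)
    (hLj : HasPartialDerivs L Lj) {j : Fin d}
    (hcont : ContinuousOn (Lj j) {x : Fin d → ℝ | (∀ i, 0 ≤ x i) ∧ 0 < x j})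
    (R : ℝ) {ε : ℝ} (hε : 0 < ε) :
    ∀ᶠ δ in 𝓝 (0 : ℝ), ∀ x ∈ Icc (0 : Fin d → ℝ) (fun _ => R), ∀ z ∈ Icc 0 (fun _ => R),
      0 < x j → x j ≤ 2 * z j → dist z x ≤ δ → |x j ^ 2 * (Lj j z - Lj j x)| < ε := by
  obtain ⟨η, hη_small, hη⟩ : ∃ η, 2 * (η ^ 2 + 2 * η * (d * |R|)) < ε ∧ 0 < η := by
    have hlim : Tendsto (fun η : ℝ => 2 * (η ^ 2 + 2 * η * (d * |R|))) (𝓝[>] 0) (𝓝 0) := by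
      have := (by fun_prop : Continuous fun η : ℝ => 2 * (η ^ 2 + 2 * η * (d * |R|))).tendsto 0
      simpa using tendsto_nhdsWithin_of_tendsto_nhds this
    exact ((hlim.eventually (gt_mem_nhds hε)).and self_mem_nhdsWithin).exists
  set K := Icc (0 : Fin d → ℝ) (fun _ => R) ∩ {w | η / 2 ≤ w j}
  have hK : IsCompact K := isCompact_Icc.inter_right (isClosed_le continuous_const
    (continuous_apply j))
  have hKsub : K ⊆ {x | (∀ i, 0 ≤ x i) ∧ 0 < x j} := fun w hw =>
    ⟨hw.1.1, (half_pos hη).trans_le hw.2⟩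
  obtain ⟨δ₀, hδ₀, hUC⟩ := Metric.uniformContinuousOn_iff.1
    (hK.uniformContinuousOn_of_continuous (hcont.mono hKsub)) (ε / (R ^ 2 + 1)) (by positivity)
  filter_upwards [eventually_lt_nhds hδ₀] with δ hδ x hx z hz hxj hxz hdist
  have hxR : x j ≤ R := hx.2 j
  by_cases hsmall : x j ≤ η
  · have hbound : ∀ w ∈ Icc (0 : Fin d → ℝ) (fun _ => R), x j ≤ 2 * w j →
        |x j ^ 2 * Lj j w| ≤ η ^ 2 + 2 * η * (d * |R|) := fun w hw hxw => by
      have hsum := (sum_le_of_mem_Icc hw).trans (mul_le_mul_of_nonneg_left (le_abs_self R)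
        d.cast_nonneg)
      have hsum0 : 0 ≤ ∑ i, w i := Finset.sum_nonneg fun i _ => hw.1 i
      calc _ ≤ x j ^ 2 + 2 * x j * ∑ i, w i := hL.abs_sq_mul_partialDeriv_le hLj hw.1 hxj hxw
        _ ≤ _ := by gcongr
    calc |x j ^ 2 * (Lj j z - Lj j x)| ≤ |x j ^ 2 * Lj j z| + |x j ^ 2 * Lj j x| := by
          rw [mul_sub]; exact abs_sub _ _
      _ < ε := by linarith [hbound z hz hxz, hbound x hx (by linarith)]
  · have hdiff := hUC z ⟨hz, show η / 2 ≤ z j by linarith⟩ x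
      ⟨hx, show η / 2 ≤ x j by linarith⟩ (hdist.trans_lt hδ)
    rw [Real.dist_eq] at hdiff
    have hx2 : x j ^ 2 ≤ R ^ 2 := pow_le_pow_left₀ hxj.le hxR 2
    calc |x j ^ 2 * (Lj j z - Lj j x)| = x j ^ 2 * |Lj j z - Lj j x| := by
          rw [abs_mul, abs_of_nonneg (sq_nonneg _)]
      _ ≤ R ^ 2 * (ε / (R ^ 2 + 1)) := by gcongr
      _ < ε := by
          rw [mul_div_assoc', div_lt_iff₀ (by positivity)]
          nlinarith

lemma abs_mul_sq_div_le {s a T r : ℝ} (ha : 0 ≤ a) (haT : a ≤ T) (hr : 0 < r) :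
    |s * a ^ 2 / r| ≤ |s| * T ^ 2 / r := by
  rw [abs_div, abs_mul, abs_of_pos hr, abs_of_nonneg (sq_nonneg a)]
  gcongr

lemma abs_mul_sq_div_le_half {s a T r : ℝ} (ha : 0 ≤ a) (haT : a ≤ T) (hr : 0 < r)
    (hsr : 2 * |s| * T ≤ r) : |s * a ^ 2 / r| ≤ a / 2 := by
  rw [abs_div, abs_mul, abs_of_pos hr, abs_of_nonneg (sq_nonneg a), div_le_iff₀ hr]
  nlinarith [mul_le_mul_of_nonneg_left haT (mul_nonneg (abs_nonneg s) ha)]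

lemma HasPartialDerivs.exists_mul_sub_eq_sum (hLj : HasPartialDerivs L Lj) {s T r : ℝ}
    {x : Fin d → ℝ} (hx : x ∈ Icc 0 (fun _ => T)) (hr1 : 1 ≤ r) (hrs : 2 * |s| * T ≤ r) :
    ∃ z : Fin d → Fin d → ℝ, (∀ j, z j ∈ Icc (0 : Fin d → ℝ) (fun _ => T + |s| * T ^ 2)) ∧
      (∀ j, dist (z j) x ≤ |s| * T ^ 2 / r) ∧ (∀ j, x j ≤ 2 * z j j) ∧
      r * (L (fun j => x j + s * x j ^ 2 / r) - L x) = ∑ j, s * (x j ^ 2 * Lj j (z j)) := by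
  have hr0 : 0 < r := one_pos.trans_le hr1
  set R := T + |s| * T ^ 2
  set y : Fin d → ℝ := fun j => x j + s * x j ^ 2 / r
  have hx0 i : 0 ≤ x i := hx.1 i
  have hxT i : x i ≤ T := hx.2 i
  have hyx i : |y i - x i| ≤ |s| * T ^ 2 / r := by
    simpa [y] using abs_mul_sq_div_le (s := s) (hx0 i) (hxT i) hr0
  have hy_half i : x i / 2 ≤ y i := by
    have := abs_mul_sq_div_le_half (hx0 i) (hxT i) hr0 hrs
    have := neg_abs_le (s * x i ^ 2 / r)
    simp only [y]; linarith
  have hyR i : y i ≤ R := by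
    have h1 : |s| * T ^ 2 / r ≤ |s| * T ^ 2 := div_le_self (by positivity) hr1
    have := le_abs_self (y i - x i)
    linarith [hyx i, hxT i]
  obtain ⟨z, hz, hz_eq⟩ := hLj.exists_sub_eq_sum_mul (y := y) hx0
    (fun i => by linarith [hx0 i, hy_half i]) fun j => by
      rcases (hx0 j).eq_or_lt with h | h
      · left; simp [y, ← h]
      · right; exact ⟨h, (half_pos h).trans_le (hy_half j)⟩
  have hTR : T ≤ R := le_add_of_nonneg_right (by positivity)
  refine ⟨z, fun j => ?_, fun j => ?_, fun j => ?_, ?_⟩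
  · refine ⟨fun i => ?_, fun i => ?_⟩ <;> rcases mem_uIcc.1 (hz j i) with h | h <;>
      simp only [Pi.zero_apply] <;> linarith [hx0 i, hxT i, hy_half i, hyR i]
  · exact (dist_pi_le_iff (by positivity)).2 fun i =>
      (abs_sub_left_of_mem_uIcc (hz j i)).trans (hyx i)
  · rcases mem_uIcc.1 (hz j j) with h | h <;> linarith [hx0 j, hy_half j]
  · rw [hz_eq, Finset.mul_sum]
    refine Finset.sum_congr rfl fun j _ => ?_
    simp only [y, add_sub_cancel_left]
    field_simp

theorem IsSTDF.tendstoUniformlyOn_mul_sub (hL : IsSTDF d L) (hLj : HasPartialDerivs L Lj)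
    (hcont : ∀ j, ContinuousOn (Lj j) {x : Fin d → ℝ | (∀ i, 0 ≤ x i) ∧ 0 < x j}) (s T : ℝ) :
    TendstoUniformlyOn
      (fun (r : ℝ) (x : Fin d → ℝ) => r * (L (fun j => x j + s * x j ^ 2 / r) - L x))
      (fun x => s * gammaFun Lj x) atTop (Icc 0 (fun _ => T)) := by
  rw [Metric.tendstoUniformlyOn_iff]
  intro ε hε
  set R := T + |s| * T ^ 2
  set ε' := ε / (d * |s| + 1)
  have hkey := eventually_all.2 fun j =>
    hL.eventually_abs_sq_mul_partialDeriv_sub_lt hLj (hcont j) R (ε := ε') (by positivity)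
  have hδ : Tendsto (fun r : ℝ => |s| * T ^ 2 / r) atTop (𝓝 0) :=
    tendsto_const_nhds.div_atTop tendsto_id
  filter_upwards [hδ.eventually hkey, eventually_ge_atTop 1, eventually_ge_atTop (2 * |s| * T)]
    with r hr hr1 hrs x hx
  obtain ⟨z, hzR, hzx, hxz, hz_eq⟩ := hLj.exists_mul_sub_eq_sum (s := s) hx hr1 hrs
  have hxR : x ∈ Icc (0 : Fin d → ℝ) (fun _ => R) :=
    ⟨hx.1, fun i => (hx.2 i).trans (le_add_of_nonneg_right (by positivity))⟩
  have hterm j : |s * ((if 0 < x j then x j ^ 2 * Lj j x else 0) - x j ^ 2 * Lj j (z j))|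
      ≤ |s| * ε' := by
    by_cases hxj : 0 < x j
    · rw [if_pos hxj, abs_mul, abs_sub_comm, ← mul_sub]
      exact mul_le_mul_of_nonneg_left (hr j x hxR (z j) (hzR j) hxj (hxz j) (hzx j)).le
        (abs_nonneg s)
    · rw [if_neg hxj, le_antisymm (not_lt.1 hxj) (hx.1 j), zero_pow two_ne_zero, zero_mul,
        sub_self, mul_zero, abs_zero]
      positivity
  calc dist (s * gammaFun Lj x) (r * (L (fun j => x j + s * x j ^ 2 / r) - L x))
      = |∑ j, s * ((if 0 < x j then x j ^ 2 * Lj j x else 0) - x j ^ 2 * Lj j (z j))| := by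
        simp only [Real.dist_eq, hz_eq, gammaFun, Finset.mul_sum, ← Finset.sum_sub_distrib,
          mul_sub]
    _ ≤ ∑ _j : Fin d, |s| * ε' := (Finset.abs_sum_le_sum_abs _ _).trans
        (Finset.sum_le_sum fun j _ => hterm j)
    _ < ε := by
        rw [Finset.sum_const, Finset.card_univ, Fintype.card_fin, nsmul_eq_mul, ← mul_assoc,
          mul_div_assoc', div_lt_iff₀ (by positivity)]
        linarith

end PartialDerivs

/-- Lemma 2.5 (ii). If the partial derivatives `∂_j L` exist and are
continuous on `{x ≥ 0 : x_j > 0}`, then both convergences in (2.1) and (2.2) are uniform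
on `[0,T]^d` and `Γ₁ = Γ₂ = Γ` with `Γ(x) = Σ_{j : x_j > 0} x_j²·∂_j L(x)`. -/
theorem statement8 {d : ℕ} (L : (Fin d → ℝ) → ℝ) (hL : IsSTDF d L)
    (Lj : Fin d → (Fin d → ℝ) → ℝ)
    (hderiv : ∀ j : Fin d, ∀ x : Fin d → ℝ, (∀ i, 0 ≤ x i) → 0 < x j →
      HasDerivAt (fun h : ℝ => L (Function.update x j h)) (Lj j x) (x j))
    (hcont : ∀ j : Fin d,
      ContinuousOn (Lj j) {x : Fin d → ℝ | (∀ i, 0 ≤ x i) ∧ 0 < x j}) :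
    ∀ T : ℝ, 0 < T →
      TendstoUniformlyOn
        (fun (r : ℝ) (x : Fin d → ℝ) => r * (L (fun j => x j + (x j) ^ 2 / r) - L x))
        (fun x => ∑ j, if 0 < x j then (x j) ^ 2 * Lj j x else 0)
        Filter.atTop (Set.Icc (0 : Fin d → ℝ) (fun _ => T)) ∧
      TendstoUniformlyOn
        (fun (r : ℝ) (x : Fin d → ℝ) => r * (L x - L (fun j => x j - (x j) ^ 2 / r)))
        (fun x => ∑ j, if 0 < x j then (x j) ^ 2 * Lj j x else 0)
        Filter.atTop (Set.Icc (0 : Fin d → ℝ) (fun _ => T)) := by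
  intro T _
  refine ⟨?_, ?_⟩
  · simpa [gammaFun] using hL.tendstoUniformlyOn_mul_sub hderiv hcont 1 T
  · convert (hL.tendstoUniformlyOn_mul_sub hderiv hcont (-1) T).neg using 1
    · ext r x
      simp only [Pi.neg_apply, neg_one_mul, neg_div, ← sub_eq_add_neg]
      ring
    · ext x
      simp [gammaFun]
end
end

section
/- Let C be a copula lying in the copula domain of attraction of the extreme-value copula C_∞ associated with the stable tail dependence function L. Suppose Condition (SO)_b holds with continuous non-null S_b and with α_b regularly varying of index ρ_b ≤ 0, and suppose 2r·α_b(r) → ∞ as r → ∞. Then Condition (SO)_p holds with α_p ≡ α_b and S_p(x) = −S_b(e^{−x})/C_∞(e^{−x}); that is, (t(1 − C(1 − x/t)) − L(x))/α_b(t) → −S_b(e^{−x_1},…,e^{−x_d})/C_∞(e^{−x_1},…,e^{−x_d}) as t → ∞, uniformly in x ∈ [0,T]^d for every T > 0. -/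
open Filter Topology

noncomputable section

/-!
Put `Q = C(e^{-x/t})` and `P = C(1 - x/t)`. Since `C_∞(e^{-x}) = e^{-L(x)}`, condition (SO)_b
at `r = t` says `Q^t / C_∞(e^{-x}) = 1 + α(t) S_b(e^{-x}) / C_∞(e^{-x}) + o(α(t))`, so taking
logarithms `t log Q + L(x) = α(t) S_b(e^{-x}) / C_∞(e^{-x}) + o(α(t))`. On the other hand the
Lipschitz bound on `C` gives `t(1 - P) = -t log Q + O(1/t)`, and `1/t = o(α(t))` because
`t α(t) → ∞`. Every estimate is uniform for `x ∈ [0,T]^d`, where `C_∞(e^{-x}) ≥ e^{-dT}`.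
-/

open Set

namespace Real

lemma abs_log_one_add_sub_self_le {w : ℝ} (hw : |w| ≤ 1 / 2) : |log (1 + w) - w| ≤ 2 * w ^ 2 := by
  have h := abs_log_sub_add_sum_range_le (x := -w) (by rw [abs_neg]; linarith) 1
  simp only [Finset.range_one, Finset.sum_singleton, zero_add, pow_one, Nat.cast_zero,
    div_one, abs_neg, sub_neg_eq_add, add_comm (1 : ℝ)] at h
  calc |log (1 + w) - w| = |-w + log (w + 1)| := by rw [add_comm 1 w]; ring_nf
    _ ≤ |w| ^ 2 / (1 - |w|) := h
    _ ≤ |w| ^ 2 / (1 / 2) := by gcongr; linarith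
    _ = 2 * w ^ 2 := by rw [sq_abs]; ring

end Real

lemma tendstoUniformlyOn_of_abs_sub_le {ι α : Type*} {l : Filter ι} {s : Set α}
    {F : ι → α → ℝ} {f : α → ℝ} {g : ι → ℝ} (hg : Tendsto g l (𝓝 0))
    (hFg : ∀ᶠ n in l, ∀ x ∈ s, |F n x - f x| ≤ g n) : TendstoUniformlyOn F f l s := by
  rw [Metric.tendstoUniformlyOn_iff]
  intro ε hε
  filter_upwards [hFg, hg.eventually (gt_mem_nhds hε)] with n hn hgn x hx
  rw [dist_comm, Real.dist_eq]
  exact (hn x hx).trans_lt hgn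

lemma TendstoUniformlyOn.div_of_le {ι α : Type*} {l : Filter ι} {s : Set α}
    {F : ι → α → ℝ} {f h : α → ℝ} {c : ℝ} (hF : TendstoUniformlyOn F f l s) (hc : 0 < c)
    (hh : ∀ x ∈ s, c ≤ h x) :
    TendstoUniformlyOn (fun n x => F n x / h x) (fun x => f x / h x) l s := by
  rw [Metric.tendstoUniformlyOn_iff] at hF ⊢
  intro ε hε
  filter_upwards [hF (ε * c) (by positivity)] with n hn x hx
  have hhx : 0 < h x := hc.trans_le (hh x hx)
  rw [Real.dist_eq, ← sub_div, abs_div, abs_of_pos hhx, div_lt_iff₀ hhx]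
  calc |f x - F n x| < ε * c := by rw [← Real.dist_eq]; exact hn x hx
    _ ≤ ε * h x := by gcongr; exact hh x hx

lemma TendstoUniformlyOn.log_one_add_mul_div {ι α : Type*} {l : Filter ι} {s : Set α}
    {F : ι → α → ℝ} {f : α → ℝ} {a : ι → ℝ} {B : ℝ} (hF : TendstoUniformlyOn F f l s)
    (hf : ∀ x ∈ s, |f x| ≤ B) (ha : Tendsto a l (𝓝 0)) (ha0 : ∀ᶠ n in l, 0 < a n) :
    TendstoUniformlyOn (fun n x => Real.log (1 + a n * F n x) / a n) f l s := by
  have hFB : ∀ᶠ n in l, ∀ x ∈ s, |F n x| ≤ B + 1 := by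
    filter_upwards [Metric.tendstoUniformlyOn_iff.mp hF 1 one_pos] with n hn x hx
    have := hn x hx
    rw [Real.dist_eq] at this
    linarith [abs_sub_abs_le_abs_sub (F n x) (f x), abs_sub_comm (f x) (F n x), hf x hx]
  have hsmall : ∀ᶠ n in l, a n * (B + 1) ≤ 1 / 2 :=
    (ha.mul_const (B + 1)).eventually (ge_mem_nhds (by rw [zero_mul]; norm_num))
  have herr : TendstoUniformlyOn (fun n x => Real.log (1 + a n * F n x) / a n - F n x) 0 l s := by
    refine tendstoUniformlyOn_of_abs_sub_le (g := fun n => 2 * a n * (B + 1) ^ 2)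
      (by simpa using (ha.const_mul 2).mul_const ((B + 1) ^ 2)) ?_
    filter_upwards [hFB, hsmall, ha0] with n hFn hsn han x hx
    have hw : |a n * F n x| ≤ 1 / 2 := by
      rw [abs_mul, abs_of_pos han]
      exact (mul_le_mul_of_nonneg_left (hFn x hx) han.le).trans hsn
    have hsq : (a n * F n x) ^ 2 ≤ a n ^ 2 * (B + 1) ^ 2 := by
      rw [mul_pow, ← sq_abs (F n x)]
      gcongr
      exact hFn x hx
    rw [Pi.zero_apply, sub_zero, div_sub' han.ne', abs_div, abs_of_pos han, div_le_iff₀ han]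
    calc |Real.log (1 + a n * F n x) - a n * F n x| ≤ 2 * (a n * F n x) ^ 2 :=
          Real.abs_log_one_add_sub_self_le hw
      _ ≤ 2 * a n * (B + 1) ^ 2 * a n := by nlinarith
  refine (herr.add hF).congr ?_ |>.congr_right ?_
  · exact Eventually.of_forall fun n x _ => by simp
  · exact fun x _ => by simp

lemma CinfFun_exp_neg {d : ℕ} (L : (Fin d → ℝ) → ℝ) (x : Fin d → ℝ) :
    CinfFun d L (fun j => Real.exp (-x j)) = Real.exp (-L x) := by
  simp only [CinfFun, Real.exp_pos, implies_true, if_true, Real.log_exp, neg_neg]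

lemma sum_div_le_of_mem_Icc {d : ℕ} {x : Fin d → ℝ} {T t : ℝ} (hx : x ∈ Icc 0 (fun _ => T))
    (ht : 0 < t) : ∑ j, x j / t ≤ d * T / t := by
  calc ∑ j, x j / t ≤ ∑ _j : Fin d, T / t := by gcongr with j; exact hx.2 j
    _ = d * T / t := by simp [mul_div_assoc]

namespace IsCopulaLike

variable {d : ℕ} {C : (Fin d → ℝ) → ℝ}

lemma abs_exp_neg_sub_one_le (hC : IsCopulaLike d C) {y : Fin d → ℝ} (hy : ∀ j, 0 ≤ y j) :
    |C (fun j => Real.exp (-y j)) - 1| ≤ ∑ j, y j := by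
  have hexp : ∀ j, 0 ≤ Real.exp (-y j) ∧ Real.exp (-y j) ≤ 1 := fun j =>
    ⟨(Real.exp_pos _).le, Real.exp_le_one_iff.mpr (neg_nonpos.mpr (hy j))⟩
  calc |C (fun j => Real.exp (-y j)) - 1|
      ≤ ∑ j, |Real.exp (-y j) - 1| := by
        simpa only [hC.1] using hC.2.2 _ _ hexp fun _ => ⟨zero_le_one, le_rfl⟩
    _ ≤ ∑ j, y j := by
        gcongr with j
        rw [abs_sub_comm, abs_of_nonneg (by linarith [(hexp j).2])]
        linarith [Real.add_one_le_exp (-y j)]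

lemma abs_exp_neg_sub_one_sub_le (hC : IsCopulaLike d C) {y : Fin d → ℝ}
    (hy : ∀ j, 0 ≤ y j ∧ y j ≤ 1) :
    |C (fun j => Real.exp (-y j)) - C (fun j => 1 - y j)| ≤ ∑ j, y j ^ 2 := by
  have hexp : ∀ j, 0 ≤ Real.exp (-y j) ∧ Real.exp (-y j) ≤ 1 := fun j =>
    ⟨(Real.exp_pos _).le, Real.exp_le_one_iff.mpr (neg_nonpos.mpr (hy j).1)⟩
  calc |C (fun j => Real.exp (-y j)) - C (fun j => 1 - y j)|
      ≤ ∑ j, |Real.exp (-y j) - (1 - y j)| :=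
        hC.2.2 _ _ hexp fun j => ⟨by linarith [(hy j).2], by linarith [(hy j).1]⟩
    _ ≤ ∑ j, y j ^ 2 := by
        gcongr with j
        have h := Real.abs_exp_sub_one_sub_id_le (x := -y j)
          (by rw [abs_neg, abs_of_nonneg (hy j).1]; exact (hy j).2)
        rwa [neg_sq, sub_neg_eq_add, sub_add] at h

lemma abs_one_sub_add_log_le (hC : IsCopulaLike d C) {y : Fin d → ℝ}
    (hy : ∀ j, 0 ≤ y j ∧ y j ≤ 1) (hsum : ∑ j, y j ≤ 1 / 2) :
    |(1 - C (fun j => 1 - y j)) + Real.log (C (fun j => Real.exp (-y j)))|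
      ≤ ∑ j, y j ^ 2 + 2 * (∑ j, y j) ^ 2 := by
  set Q := C (fun j => Real.exp (-y j))
  have hQ1 : |Q - 1| ≤ ∑ j, y j := hC.abs_exp_neg_sub_one_le fun j => (hy j).1
  have hlog : |Real.log Q - (Q - 1)| ≤ 2 * (∑ j, y j) ^ 2 := by
    have h := Real.abs_log_one_add_sub_self_le (w := Q - 1) (hQ1.trans hsum)
    rw [add_sub_cancel] at h
    refine h.trans ?_
    rw [← sq_abs (Q - 1)]
    gcongr
  calc |(1 - C (fun j => 1 - y j)) + Real.log Q|
      = |(Q - C (fun j => 1 - y j)) + (Real.log Q - (Q - 1))| := by ring_nf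
    _ ≤ ∑ j, y j ^ 2 + 2 * (∑ j, y j) ^ 2 :=
        (abs_add_le _ _).trans (add_le_add (hC.abs_exp_neg_sub_one_sub_le hy) hlog)

lemma eventually_pos_on_Icc (hC : IsCopulaLike d C) (T : ℝ) :
    ∀ᶠ t in atTop, ∀ x ∈ Icc 0 (fun _ => T), 0 < C (fun j => Real.exp (-(x j / t))) := by
  filter_upwards [eventually_gt_atTop 0, eventually_gt_atTop (d * T)] with t ht htT x hx
  have hsum : ∑ j, x j / t < 1 :=
    (sum_div_le_of_mem_Icc hx ht).trans_lt ((div_lt_one ht).mpr htT)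
  have h := hC.abs_exp_neg_sub_one_le (y := fun j => x j / t) fun j => div_nonneg (hx.1 j) ht.le
  linarith [abs_le.mp h]

lemma tendstoUniformlyOn_mul_one_sub_add_mul_log (hC : IsCopulaLike d C) {α : ℝ → ℝ}
    (hα : Tendsto (fun t => t * α t) atTop atTop) (T : ℝ) :
    TendstoUniformlyOn (fun t x => (t * (1 - C (fun j => 1 - x j / t))
      + t * Real.log (C (fun j => Real.exp (-(x j / t))))) / α t) 0 atTop
      (Icc 0 (fun _ => T)) := by
  set K : ℝ := d * T ^ 2 + 2 * (d * T) ^ 2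
  refine tendstoUniformlyOn_of_abs_sub_le (g := fun t => K / (t * α t))
    (tendsto_const_nhds.div_atTop hα) ?_
  filter_upwards [eventually_gt_atTop 0, eventually_ge_atTop T, eventually_ge_atTop (2 * d * T),
    hα.eventually_gt_atTop 0] with t ht htT htdT htα x hx
  have hαt : 0 < α t := pos_of_mul_pos_right htα ht.le
  have hy : ∀ j, 0 ≤ x j / t ∧ x j / t ≤ 1 := fun j =>
    ⟨div_nonneg (hx.1 j) ht.le, (div_le_one ht).mpr ((hx.2 j).trans htT)⟩
  have hsum := sum_div_le_of_mem_Icc hx ht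
  have hsq : ∑ j, (x j / t) ^ 2 ≤ d * (T / t) ^ 2 := by
    calc ∑ j, (x j / t) ^ 2 ≤ ∑ _j : Fin d, (T / t) ^ 2 := by
          gcongr with j
          · exact (hy j).1
          · exact hx.2 j
      _ = d * (T / t) ^ 2 := by simp
  have hmain := hC.abs_one_sub_add_log_le hy
    (hsum.trans (by rw [div_le_iff₀ ht]; linarith))
  rw [Pi.zero_apply, sub_zero, ← mul_add, abs_div, abs_mul, abs_of_pos ht, abs_of_pos hαt,
    div_le_div_iff₀ hαt htα]
  calc t * |(1 - C (fun j => 1 - x j / t)) + Real.log (C (fun j => Real.exp (-(x j / t))))|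
        * (t * α t)
      ≤ t * (d * (T / t) ^ 2 + 2 * (d * T / t) ^ 2) * (t * α t) := by
        gcongr
        refine hmain.trans (add_le_add hsq ?_)
        gcongr
        exact Finset.sum_nonneg fun j _ => (hy j).1
    _ = K * α t := by field_simp; ring

end IsCopulaLike

lemma SObm.tendstoUniformlyOn_mul_log_add {d : ℕ} {C L Sb : (Fin d → ℝ) → ℝ} {α : ℝ → ℝ}
    (hSO : SObm d C (CinfFun d L) Sb α) (hL : IsSTDF d L) (hC : IsCopulaLike d C)
    (hSb : ContinuousOn Sb (Icc 0 (fun _ => 1))) (hα0 : Tendsto α atTop (𝓝 0))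
    (hαpos : ∀ᶠ t in atTop, 0 < α t) {T : ℝ} (hT : 0 < T) :
    TendstoUniformlyOn
      (fun t x => (t * Real.log (C (fun j => Real.exp (-(x j / t)))) + L x) / α t)
      (fun x => Sb (fun j => Real.exp (-x j)) / CinfFun d L (fun j => Real.exp (-x j))) atTop
      (Icc 0 (fun _ => T)) := by
  obtain ⟨M, hM⟩ := isCompact_Icc.exists_bound_of_continuousOn hSb
  set e : (Fin d → ℝ) → Fin d → ℝ := fun x j => Real.exp (-x j)
  have he : Icc 0 (fun _ => T) ⊆ e ⁻¹' Icc (fun _ => Real.exp (-T)) (fun _ => 1) :=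
    fun x hx => ⟨fun j => Real.exp_le_exp.mpr (neg_le_neg (hx.2 j)),
      fun j => Real.exp_le_one_iff.mpr (neg_nonpos.mpr (hx.1 j))⟩
  have hCinf : ∀ x ∈ Icc 0 (fun _ => T), Real.exp (-(d * T)) ≤ CinfFun d L (e x) := by
    intro x hx
    rw [CinfFun_exp_neg, Real.exp_le_exp, neg_le_neg_iff]
    calc L x ≤ ∑ j, x j := (hL.2.2.2 x hx.1).2
      _ ≤ ∑ _j : Fin d, T := by gcongr with j; exact hx.2 j
      _ = d * T := by simp
  have hbound : ∀ x ∈ Icc 0 (fun _ => T),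
      |Sb (e x) / CinfFun d L (e x)| ≤ M / Real.exp (-(d * T)) := by
    intro x hx
    have hSbx : ‖Sb (e x)‖ ≤ M := hM _ ⟨fun j => (Real.exp_pos _).le, (he hx).2⟩
    rw [abs_div, abs_of_pos ((Real.exp_pos _).trans_le (hCinf x hx))]
    exact div_le_div₀ ((norm_nonneg _).trans hSbx) hSbx (Real.exp_pos _) (hCinf x hx)
  have hSOT := (hSO _ (Real.exp_pos _) (Real.exp_lt_one_iff.mpr (neg_lt_zero.mpr hT))).comp e
  refine ((hSOT.mono he).div_of_le (Real.exp_pos _) hCinf |>.log_one_add_mul_div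
    hbound hα0 hαpos).congr ?_
  filter_upwards [hαpos, hC.eventually_pos_on_Icc T] with t hαt hQ x hx
  have hroot : (fun j => e x j ^ (1 / t)) = fun j => Real.exp (-(x j / t)) := by
    funext j
    rw [← Real.exp_mul]
    ring_nf
  simp only [Function.comp, hroot, CinfFun_exp_neg, e]
  set Q := C (fun j => Real.exp (-(x j / t)))
  congr 1
  rw [show 1 + α t * ((Q ^ t - Real.exp (-L x)) / α t / Real.exp (-L x))
      = Q ^ t / Real.exp (-L x) by field_simp; ring,
    Real.log_div (Real.rpow_pos_of_pos (hQ x hx) t).ne' (Real.exp_pos _).ne',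
    Real.log_rpow (hQ x hx), Real.log_exp, sub_neg_eq_add]

theorem statement12_general {d : ℕ} (C L Sb : (Fin d → ℝ) → ℝ) (αb : ℝ → ℝ)
    (hL : IsSTDF d L) (hC : IsCopulaLike d C)
    (hα0 : Filter.Tendsto αb Filter.atTop (nhds 0))
    (hScont : ContinuousOn Sb (Set.Icc (0 : Fin d → ℝ) (fun _ => 1)))
    (hSO : SObm d C (CinfFun d L) Sb αb)
    (hcinf : Filter.Tendsto (fun r : ℝ => 2 * r * αb r) Filter.atTop Filter.atTop) :
    SOpot d C L
      (fun x => -(Sb (fun j => Real.exp (-x j))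
        / CinfFun d L (fun j => Real.exp (-x j)))) αb := by
  intro T hT
  have htα : Tendsto (fun t => t * αb t) atTop atTop := by
    simpa [mul_assoc] using hcinf.atTop_div_const two_pos
  have hαpos : ∀ᶠ t in atTop, 0 < αb t := by
    filter_upwards [eventually_gt_atTop 0, htα.eventually_gt_atTop 0] with t ht h
    exact pos_of_mul_pos_right h ht.le
  have hpot := hC.tendstoUniformlyOn_mul_one_sub_add_mul_log htα T
  have hlog := hSO.tendstoUniformlyOn_mul_log_add hL hC hScont hα0 hαpos hT
  refine ((hpot.sub hlog).congr ?_).congr_right ?_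
  · exact Eventually.of_forall fun t x _ => by simp only [Pi.sub_apply]; ring
  · exact fun x _ => by simp

/-- Theorem 2.6 (b)(i). If (SO)_b holds with `α_b ∈ RV_{ρ_b}`, `ρ_b ≤ 0`,
and `2r·α_b(r) → ∞`, then (SO)_p holds with `α_p ≡ α_b` and
`S_p(x) = −S_b(e^{−x})/C_∞(e^{−x})`. -/
theorem statement12 {d : ℕ} (C L Sb : (Fin d → ℝ) → ℝ) (αb : ℝ → ℝ) (ρb : ℝ)
    (hL : IsSTDF d L) (hC : IsCopulaLike d C)
    (hDOA : PotDOA d C L)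
    (hαpos : ∀ r : ℝ, 0 < r → 0 < αb r)
    (hα0 : Filter.Tendsto αb Filter.atTop (nhds 0))
    (hScont : ContinuousOn Sb (Set.Icc (0 : Fin d → ℝ) (fun _ => 1)))
    (hSnonnull : ∃ u : Fin d → ℝ, (∀ j, 0 ≤ u j ∧ u j ≤ 1) ∧ Sb u ≠ 0)
    (hSO : SObm d C (CinfFun d L) Sb αb)
    (hρ : ρb ≤ 0) (hrv : RegVary αb ρb)
    (hcinf : Filter.Tendsto (fun r : ℝ => 2 * r * αb r) Filter.atTop Filter.atTop) :
    SOpot d C L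
      (fun x => -(Sb (fun j => Real.exp (-x j))
        / CinfFun d L (fun j => Real.exp (-x j)))) αb :=
  statement12_general C L Sb αb hL hC hα0 hScont hSO hcinf
end
end
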